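/- arXiv:1107.5125 — 3 statements merged into one kernel-verified Lean document; each statement's English description precedes it below -/
import Mathlib

section
/- Any cyclic permutation in S_∞ of word length 2n (i.e., any (2n+1)-cycle) can be written as a product of two permutations each conjugate to ι_n in S_∞. -/
/-- `g` belongs to `S_∞`: a permutation of `ℕ` with finite support. -/
def FinSupp (g : Equiv.Perm ℕ) : Prop := {x : ℕ | g x ≠ x}.Finite

/-- `g` is an even permutation: a product of an even number of transpositions. -/
def IsEvenPerm (g : Equiv.Perm ℕ) : Prop :=
  ∃ l : List (Equiv.Perm ℕ), (∀ τ ∈ l, τ.IsSwap) ∧ Even l.length ∧ l.prod = g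

/-- `g` belongs to the infinite alternating group `A_∞`. -/
def MemAinf (g : Equiv.Perm ℕ) : Prop := FinSupp g ∧ IsEvenPerm g

/-- `g` and `h` are conjugate in `S_∞` (by a finitely supported permutation). -/
def ConjS (g h : Equiv.Perm ℕ) : Prop := ∃ c, FinSupp c ∧ c * g * c⁻¹ = h

/-- `g` and `h` are conjugate in `A_∞` (by an even finitely supported permutation). -/
def ConjA (g h : Equiv.Perm ℕ) : Prop := ∃ c, MemAinf c ∧ c * g * c⁻¹ = h

/-- the class `[h]`: the union of the `A_∞`-conjugacy classes of `h` and `h⁻¹`. -/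
def cls (h : Equiv.Perm ℕ) : Set (Equiv.Perm ℕ) := {x | ConjA h x ∨ ConjA h⁻¹ x}

/-- `λ_h(g)`: the minimal `n` such that `g` is a product of `n` elements of `[h]`. -/
noncomputable def lam (h g : Equiv.Perm ℕ) : ℕ :=
  sInf {n | ∃ l : List (Equiv.Perm ℕ), l.length = n ∧ (∀ x ∈ l, x ∈ cls h) ∧ l.prod = g}

/-- the word length `λ(g)`: the minimal number of transpositions with product `g`. -/
noncomputable def wl (g : Equiv.Perm ℕ) : ℕ :=
  sInf {n | ∃ l : List (Equiv.Perm ℕ), l.length = n ∧ (∀ τ ∈ l, τ.IsSwap) ∧ l.prod = g}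

/-- `ι_k = (1 2)(3 4)⋯(2k−1 2k)`. -/
def iota (k : ℕ) : Equiv.Perm ℕ :=
  ((List.range k).map (fun i => Equiv.swap (2*i+1) (2*i+2))).prod

namespace Stmt12Aux


open Equiv

lemma finSupp_one : FinSupp 1 := by
  simp [FinSupp]

lemma finSupp_swap (a b : ℕ) : FinSupp (Equiv.swap a b) := by
  apply Set.Finite.subset ((Set.finite_singleton b).insert a)
  intro y hy
  simp only [Set.mem_setOf_eq] at hy
  by_contra h
  simp only [Set.mem_insert_iff, Set.mem_singleton_iff] at h
  push_neg at h
  exact hy (Equiv.swap_apply_of_ne_of_ne h.1 h.2)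

lemma finSupp_mul {f g : Equiv.Perm ℕ} (hf : FinSupp f) (hg : FinSupp g) : FinSupp (f * g) := by
  apply Set.Finite.subset (hf.union hg)
  intro y hy
  simp only [Set.mem_setOf_eq, Equiv.Perm.mul_apply] at hy
  by_contra h
  simp only [Set.mem_union, Set.mem_setOf_eq] at h
  push_neg at h
  rw [h.2, h.1] at hy
  exact hy rfl

lemma finSupp_inv {f : Equiv.Perm ℕ} (hf : FinSupp f) : FinSupp f⁻¹ := by
  apply Set.Finite.subset hf
  intro y hy
  simp only [Set.mem_setOf_eq] at hy ⊢
  intro h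
  have h2 : f⁻¹ (f y) = f⁻¹ y := congrArg _ h
  rw [show f⁻¹ (f y) = y from f.symm_apply_apply y] at h2
  exact hy h2.symm

/-- the product of swaps `(u 0, v 0) ⋯ (u (n-1), v (n-1))`. -/
def PS (n : ℕ) (u v : ℕ → ℕ) : Equiv.Perm ℕ :=
  ((List.range n).map fun i => Equiv.swap (u i) (v i)).prod

lemma PS_succ (n : ℕ) (u v : ℕ → ℕ) :
    PS (n+1) u v = PS n u v * Equiv.swap (u n) (v n) := by
  unfold PS
  rw [List.range_succ, List.map_append, List.prod_append]
  simp

lemma PS_fix {n : ℕ} {u v : ℕ → ℕ} {y : ℕ} (hy : ∀ i, i < n → y ≠ u i ∧ y ≠ v i) :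
    PS n u v y = y := by
  induction n with
  | zero => simp [PS]
  | succ n ih =>
    rw [PS_succ, Equiv.Perm.mul_apply,
      Equiv.swap_apply_of_ne_of_ne (hy n (by omega)).1 (hy n (by omega)).2]
    exact ih fun i hi => hy i (by omega)

/-- distinctness hypothesis on the `2n` points. -/
def Dist (n : ℕ) (u v : ℕ → ℕ) : Prop :=
  ∀ i j, i < n → j < n → (u i ≠ v j) ∧ (i ≠ j → u i ≠ u j ∧ v i ≠ v j)

lemma PS_eval {n : ℕ} {u v : ℕ → ℕ} (hd : Dist n u v) {k : ℕ} (hk : k < n) :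
    PS n u v (u k) = v k ∧ PS n u v (v k) = u k := by
  induction n with
  | zero => omega
  | succ n ih =>
    rcases Nat.lt_or_ge k n with hkn | hkn
    · have hd' : Dist n u v := fun i j hi hj => hd i j (by omega) (by omega)
      rw [PS_succ, Equiv.Perm.mul_apply, Equiv.Perm.mul_apply]
      have h1 : u k ≠ u n := ((hd k n (by omega) (by omega)).2 (by omega)).1
      have h2 : u k ≠ v n := (hd k n (by omega) (by omega)).1
      have h3 : v k ≠ u n := fun h => ((hd n k (by omega) (by omega)).1 h.symm)
      have h4 : v k ≠ v n := ((hd k n (by omega) (by omega)).2 (by omega)).2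
      rw [Equiv.swap_apply_of_ne_of_ne h1 h2, Equiv.swap_apply_of_ne_of_ne h3 h4]
      exact ih hd' hkn
    · have hk' : k = n := by omega
      subst hk'
      rw [PS_succ, Equiv.Perm.mul_apply, Equiv.Perm.mul_apply,
        Equiv.swap_apply_left, Equiv.swap_apply_right]
      constructor
      · apply PS_fix
        intro i hi
        exact ⟨fun h => (hd i k (by omega) (by omega)).1 h.symm,
          fun h => ((hd i k (by omega) (by omega)).2 (by omega)).2 h.symm⟩
      · apply PS_fix
        intro i hi
        exact ⟨fun h => ((hd i k (by omega) (by omega)).2 (by omega)).1 h.symm,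
          fun h => (hd k i (by omega) (by omega)).1 h⟩

lemma conj_prod (c : Equiv.Perm ℕ) (l : List (Equiv.Perm ℕ)) :
    c * l.prod * c⁻¹ = (l.map fun τ => c * τ * c⁻¹).prod := by
  induction l with
  | nil => simp
  | cons h t ih => rw [List.map_cons, List.prod_cons, List.prod_cons, ← ih]; group

lemma exists_perm_map (k : ℕ) (v w : ℕ → ℕ)
    (hv : ∀ i j, i < k → j < k → i ≠ j → v i ≠ v j)
    (hw : ∀ i j, i < k → j < k → i ≠ j → w i ≠ w j) :
    ∃ c : Equiv.Perm ℕ, FinSupp c ∧ ∀ i, i < k → c (v i) = w i := by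
  induction k with
  | zero => exact ⟨1, finSupp_one, fun i hi => by omega⟩
  | succ k ih =>
    obtain ⟨c, hcfs, hc⟩ := ih (fun i j hi hj => hv i j (by omega) (by omega))
      (fun i j hi hj => hw i j (by omega) (by omega))
    refine ⟨Equiv.swap (c (v k)) (w k) * c, finSupp_mul (finSupp_swap _ _) hcfs, ?_⟩
    intro i hi
    rcases Nat.lt_or_ge i k with hik | hik
    · rw [Equiv.Perm.mul_apply, hc i hik]
      apply Equiv.swap_apply_of_ne_of_ne
      · intro h
        exact hv i k (by omega) (by omega) (by omega) (c.injective (by rw [hc i hik]; exact h))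
      · exact hw i k (by omega) (by omega) (by omega)
    · have : i = k := by omega
      subst this
      rw [Equiv.Perm.mul_apply, Equiv.swap_apply_left]

lemma conjS_PS (n : ℕ) (u v : ℕ → ℕ) (hd : Dist n u v) : ConjS (iota n) (PS n u v) := by
  set V : ℕ → ℕ := fun j => if j % 2 = 0 then u (j / 2) else v (j / 2) with hV
  set W : ℕ → ℕ := fun j => j + 1 with hW
  have hVinj : ∀ p q, p < 2*n → q < 2*n → p ≠ q → V p ≠ V q := by
    intro p q hp hq hpq
    simp only [hV]
    split_ifs with h1 h2 h2
    · exact ((hd (p/2) (q/2) (by omega) (by omega)).2 (by omega)).1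
    · exact (hd (p/2) (q/2) (by omega) (by omega)).1
    · exact fun h => (hd (q/2) (p/2) (by omega) (by omega)).1 h.symm
    · exact ((hd (p/2) (q/2) (by omega) (by omega)).2 (by omega)).2
  have hWinj : ∀ p q, p < 2*n → q < 2*n → p ≠ q → W p ≠ W q := by
    intro p q hp hq hpq; simp only [hW]; omega
  obtain ⟨c, hcfs, hc⟩ := exists_perm_map (2*n) V W hVinj hWinj
  have hcu : ∀ i, i < n → c (u i) = 2*i+1 := by
    intro i hi
    have h1 : V (2*i) = u i := by
      simp only [hV]; rw [if_pos (by omega)]; congr 1; omega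
    have := hc (2*i) (by omega)
    rw [h1] at this; rw [this]
  have hcv : ∀ i, i < n → c (v i) = 2*i+2 := by
    intro i hi
    have h1 : V (2*i+1) = v i := by
      simp only [hV]; rw [if_neg (by omega)]; congr 1; omega
    have := hc (2*i+1) (by omega)
    rw [h1] at this; rw [this, hW]
  have heq : c * PS n u v * c⁻¹ = iota n := by
    rw [PS, conj_prod, List.map_map, iota]
    congr 1
    apply List.map_congr_left
    intro i hi
    rw [List.mem_range] at hi
    simp only [Function.comp_apply]
    rw [← Equiv.swap_apply_apply, hcu i hi, hcv i hi]
  exact ⟨c⁻¹, finSupp_inv hcfs, by rw [← heq]; group⟩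



open Equiv

/-- the product `(x 0, x k)(x 0, x (k-1)) ⋯ (x 0, x 1)`. -/
def QP (x : ℕ → ℕ) (k : ℕ) : Equiv.Perm ℕ :=
  ((List.range k).map fun i => Equiv.swap (x 0) (x (k - i))).prod

lemma QP_succ (x : ℕ → ℕ) (k : ℕ) :
    QP x (k+1) = Equiv.swap (x 0) (x (k+1)) * QP x k := by
  unfold QP
  rw [List.range_succ_eq_map, List.map_cons, List.map_map, List.prod_cons]
  have h2 : ((fun i => Equiv.swap (x 0) (x (k + 1 - i))) ∘ Nat.succ)
      = (fun i => Equiv.swap (x 0) (x (k - i))) := by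
    funext i
    simp only [Function.comp_apply, Nat.succ_sub_succ]
  rw [h2]
  norm_num

lemma QP_prop (x : ℕ → ℕ) (m : ℕ)
    (hinj : ∀ i j, i < m → j < m → i ≠ j → x i ≠ x j) :
    ∀ k, k < m →
      (∀ i, i < k → QP x k (x i) = x (i+1)) ∧ QP x k (x k) = x 0 ∧
        (∀ y, (∀ i, i ≤ k → y ≠ x i) → QP x k y = y) := by
  intro k
  induction k with
  | zero =>
    intro _
    refine ⟨fun i hi => by omega, by simp [QP], fun y hy => by simp [QP]⟩
  | succ k ih =>
    intro hk1
    obtain ⟨ih1, ih2, ih3⟩ := ih (by omega)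
    refine ⟨?_, ?_, ?_⟩
    · intro i hi
      rw [QP_succ, Equiv.Perm.mul_apply]
      rcases Nat.lt_or_ge i k with hik | hik
      · rw [ih1 i hik]
        exact Equiv.swap_apply_of_ne_of_ne
          (fun h => hinj (i+1) 0 (by omega) (by omega) (by omega) h)
          (fun h => hinj (i+1) (k+1) (by omega) (by omega) (by omega) h)
      · have : i = k := by omega
        subst this
        rw [ih2, Equiv.swap_apply_left]
    · rw [QP_succ, Equiv.Perm.mul_apply]
      rw [ih3 (x (k+1)) (fun i hi => hinj (k+1) i (by omega) (by omega) (by omega)),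
        Equiv.swap_apply_right]
    · intro y hy
      rw [QP_succ, Equiv.Perm.mul_apply, ih3 y (fun i hi => hy i (by omega))]
      exact Equiv.swap_apply_of_ne_of_ne (hy 0 (by omega)) (hy (k+1) (by omega))

noncomputable def idQ : (ℕ →₀ ℚ) →ₗ[ℚ] (ℕ →₀ ℚ) := LinearMap.id

lemma idQ_apply (v : ℕ →₀ ℚ) : idQ v = v := rfl

/-- the natural representation of a permutation of `ℕ` on `ℕ →₀ ℚ`. -/
noncomputable def piQ (σ : Equiv.Perm ℕ) : (ℕ →₀ ℚ) →ₗ[ℚ] (ℕ →₀ ℚ) :=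
  Finsupp.lmapDomain ℚ ℚ σ

lemma piQ_apply (σ : Equiv.Perm ℕ) (v : ℕ →₀ ℚ) (y : ℕ) :
    piQ σ v y = v (σ⁻¹ y) := by
  simp only [piQ, Finsupp.lmapDomain_apply]
  exact Finsupp.mapDomain_equiv_apply (f := (σ : ℕ ≃ ℕ)) v y

lemma piQ_single (σ : Equiv.Perm ℕ) (a : ℕ) :
    piQ σ (Finsupp.single a (1:ℚ)) = Finsupp.single (σ a) 1 := by
  simp [piQ, Finsupp.mapDomain_single]

lemma piQ_mul (σ τ : Equiv.Perm ℕ) : piQ (σ * τ) = (piQ σ) ∘ₗ (piQ τ) := by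
  apply LinearMap.ext
  intro v
  simp only [piQ, Finsupp.lmapDomain_apply, LinearMap.comp_apply]
  rw [show ⇑(σ * τ) = ⇑σ ∘ ⇑τ from rfl, Finsupp.mapDomain_comp]

lemma piQ_one : piQ 1 = idQ := by
  apply LinearMap.ext
  intro v
  simp only [piQ, Finsupp.lmapDomain_apply]
  rw [show ⇑(1 : Equiv.Perm ℕ) = id from rfl, Finsupp.mapDomain_id, idQ_apply]

/-- the "displacement" range of `σ`. -/
noncomputable def Dr (σ : Equiv.Perm ℕ) : Submodule ℚ (ℕ →₀ ℚ) :=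
  LinearMap.range (piQ σ - idQ)

lemma swap_range (a b : ℕ) :
    Dr (Equiv.swap a b) ≤ Submodule.span ℚ {Finsupp.single a (1:ℚ) - Finsupp.single b 1} := by
  rintro _ ⟨v, rfl⟩
  have key : (piQ (Equiv.swap a b) - idQ) v
      = (v b - v a) • (Finsupp.single a (1:ℚ) - Finsupp.single b 1) := by
    ext y
    rw [LinearMap.sub_apply, Finsupp.sub_apply, piQ_apply, idQ_apply]
    rw [show (Equiv.swap a b)⁻¹ = Equiv.swap a b from by simp]
    rcases eq_or_ne y a with rfl | hya
    · rcases eq_or_ne y b with rfl | hab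
      · simp
      · rw [Equiv.swap_apply_left]
        simp [Finsupp.single_apply, hab, Ne.symm hab]
    · rcases eq_or_ne y b with rfl | hyb
      · rw [Equiv.swap_apply_right]
        simp [Finsupp.single_apply, hya, Ne.symm hya]
      · rw [Equiv.swap_apply_of_ne_of_ne hya hyb]
        simp [Finsupp.single_apply, Ne.symm hya, Ne.symm hyb]
  rw [key]
  exact Submodule.smul_mem _ _ (Submodule.mem_span_singleton_self _)

lemma list_rank (l : List (Equiv.Perm ℕ)) (hl : ∀ τ ∈ l, τ.IsSwap) :
    FiniteDimensional ℚ (Dr l.prod) ∧ Module.finrank ℚ (Dr l.prod) ≤ l.length := by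
  induction l with
  | nil =>
    have : Dr (List.prod []) = ⊥ := by
      simp only [List.prod_nil, Dr, piQ_one, sub_self, LinearMap.range_zero]
    rw [this]
    exact ⟨inferInstance, by simp⟩
  | cons τ t ih =>
    obtain ⟨ihfd, ihle⟩ := ih (fun σ hσ => hl σ (List.mem_cons_of_mem _ hσ))
    obtain ⟨a, b, hab, rfl⟩ := hl τ List.mem_cons_self
    haveI := ihfd
    set h := t.prod with ht
    have hsub : Dr (Equiv.swap a b * h)
        ≤ (Dr h).map (piQ (Equiv.swap a b)) ⊔ Dr (Equiv.swap a b) := by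
      rintro _ ⟨v, rfl⟩
      have key : (piQ (Equiv.swap a b * h) - idQ) v
          = piQ (Equiv.swap a b) ((piQ h - idQ) v)
            + (piQ (Equiv.swap a b) - idQ) v := by
        simp only [LinearMap.sub_apply, idQ_apply, piQ_mul, LinearMap.comp_apply, map_sub]
        abel
      rw [key]
      exact Submodule.add_mem_sup ⟨(piQ h - idQ) v, ⟨v, rfl⟩, rfl⟩ ⟨v, rfl⟩
    have hwne : Finsupp.single a (1:ℚ) - Finsupp.single b 1 ≠ 0 := by
      intro h0
      have := DFunLike.congr_fun h0 a
      simp [Finsupp.single_apply, Ne.symm hab] at this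
    haveI fd1 : FiniteDimensional ℚ (Dr (Equiv.swap a b)) :=
      Submodule.finiteDimensional_of_le (swap_range a b)
    have fr1 : Module.finrank ℚ (Dr (Equiv.swap a b)) ≤ 1 := by
      calc Module.finrank ℚ (Dr (Equiv.swap a b))
          ≤ Module.finrank ℚ (Submodule.span ℚ {Finsupp.single a (1:ℚ) - Finsupp.single b 1}) :=
            Submodule.finrank_mono (swap_range a b)
        _ = 1 := finrank_span_singleton hwne
    haveI fdsup : FiniteDimensional ℚ
        ((Dr h).map (piQ (Equiv.swap a b)) ⊔ Dr (Equiv.swap a b) :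
          Submodule ℚ (ℕ →₀ ℚ)) := inferInstance
    constructor
    · exact Submodule.finiteDimensional_of_le hsub
    · calc Module.finrank ℚ (Dr (Equiv.swap a b * h))
          ≤ Module.finrank ℚ ((Dr h).map (piQ (Equiv.swap a b)) ⊔ Dr (Equiv.swap a b) :
            Submodule ℚ (ℕ →₀ ℚ)) := Submodule.finrank_mono hsub
        _ ≤ Module.finrank ℚ ((Dr h).map (piQ (Equiv.swap a b)))
            + Module.finrank ℚ (Dr (Equiv.swap a b)) :=
            Submodule.finrank_add_le_finrank_add_finrank _ _
        _ ≤ Module.finrank ℚ (Dr h) + 1 :=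
            Nat.add_le_add (Submodule.finrank_map_le _ _) fr1
        _ ≤ (Equiv.swap a b :: t).length := by
            simpa using Nat.add_le_add_right ihle 1

lemma rank_lower (σ : Equiv.Perm ℕ) (M : ℕ) (x : ℕ → ℕ)
    (hinj : ∀ i j, i ≤ M → j ≤ M → i ≠ j → x i ≠ x j)
    (hσ : ∀ j, j < M → σ (x j) = x (j+1))
    [FiniteDimensional ℚ (Dr σ)] :
    M ≤ Module.finrank ℚ (Dr σ) := by
  classical
  set φ : (ℕ →₀ ℚ) →ₗ[ℚ] (Fin M → ℚ) :=
    LinearMap.pi (fun i : Fin M => ∑ j ∈ Finset.range ((i : ℕ)+1), (Finsupp.lapply (x j) : (ℕ →₀ ℚ) →ₗ[ℚ] ℚ)) with hφ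
  set ψ : (ℕ →₀ ℚ) →ₗ[ℚ] (Fin M → ℚ) := φ ∘ₗ (piQ σ - idQ) with hψ
  have hsingle : ∀ p q : ℕ, p ≤ M → q ≤ M →
      Finsupp.single (x p) (1:ℚ) (x q) = if p = q then 1 else 0 := by
    intro p q hp hq
    rw [Finsupp.single_apply]
    rcases eq_or_ne p q with rfl | hpq
    · simp
    · rw [if_neg (hinj p q hp hq hpq), if_neg hpq]
  have hkey : ∀ j : Fin M, ψ (Finsupp.single (x (j : ℕ)) 1) = - Pi.single j (1:ℚ) := by
    intro j
    have h1 : (piQ σ - idQ) (Finsupp.single (x (j : ℕ)) 1)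
        = Finsupp.single (x ((j : ℕ)+1)) 1 - Finsupp.single (x (j : ℕ)) 1 := by
      rw [LinearMap.sub_apply, idQ_apply, piQ_single, hσ j j.2]
    funext i
    rw [hψ, LinearMap.comp_apply, h1, hφ, LinearMap.pi_apply, LinearMap.sum_apply]
    have h2 : ∀ j' ∈ Finset.range ((i : ℕ)+1),
        (Finsupp.lapply (x j') : (ℕ →₀ ℚ) →ₗ[ℚ] ℚ) (Finsupp.single (x ((j : ℕ)+1)) (1:ℚ) - Finsupp.single (x (j : ℕ)) 1)
        = (if (j : ℕ)+1 = j' then (1:ℚ) else 0) - (if (j : ℕ) = j' then 1 else 0) := by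
      intro j' hj'
      rw [Finset.mem_range] at hj'
      rw [Finsupp.lapply_apply, Finsupp.sub_apply,
        hsingle ((j : ℕ)+1) j' (by omega) (by omega), hsingle (j : ℕ) j' (by omega) (by omega)]
    rw [Finset.sum_congr rfl h2, Finset.sum_sub_distrib, Finset.sum_ite_eq, Finset.sum_ite_eq]
    simp only [Finset.mem_range, Pi.neg_apply, Pi.single_apply]
    rcases eq_or_ne i j with rfl | hij
    · rw [if_neg (by omega), if_pos (by omega), if_pos rfl]
      norm_num
    · have hij' : (i : ℕ) ≠ (j : ℕ) := fun h => hij (Fin.ext h)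
      rw [if_neg hij]
      rcases Nat.lt_or_ge (j : ℕ) (i : ℕ) with h | h
      · rw [if_pos (by omega), if_pos (by omega)]
        norm_num
      · rw [if_neg (by omega), if_neg (by omega)]
        norm_num
  have hsurj : LinearMap.range ψ = ⊤ := by
    rw [Submodule.eq_top_iff']
    intro w
    have hw : w = ∑ j : Fin M, w j • (ψ (-(Finsupp.single (x (j : ℕ)) 1))) := by
      funext i
      rw [Finset.sum_apply]
      have : ∀ j : Fin M, (w j • (ψ (-(Finsupp.single (x (j : ℕ)) 1)))) i
          = if i = j then w j else 0 := by
        intro j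
        rw [map_neg, hkey, neg_neg]
        simp [Pi.single_apply, mul_ite]
      rw [Finset.sum_congr rfl (fun j _ => this j)]
      simp
    rw [hw]
    exact Submodule.sum_mem _ fun j _ =>
      Submodule.smul_mem _ _ (LinearMap.mem_range_self ψ _)
  have hrange : LinearMap.range ψ = Submodule.map φ (Dr σ) := LinearMap.range_comp _ _
  have : (M : ℕ) = Module.finrank ℚ (Submodule.map φ (Dr σ)) := by
    rw [← hrange, hsurj, finrank_top, Module.finrank_pi, Fintype.card_fin]
  rw [this]
  exact Submodule.finrank_map_le φ (Dr σ)

end Stmt12Aux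

open Stmt12Aux in
/-- a cyclic permutation of word length `2n` is a product of two
`S_∞`-conjugates of `ι_n`. -/
theorem stmt12 (g : Equiv.Perm ℕ) (hfs : FinSupp g) (hc : g.IsCycle) (n : ℕ)
    (hwl : wl g = 2 * n) :
    ∃ a b : Equiv.Perm ℕ, ConjS (iota n) a ∧ ConjS (iota n) b ∧ a * b = g := by
  classical
  obtain ⟨x0, hx0ne, hcyc⟩ := hc
  set x : ℕ → ℕ := fun i => (g ^ i) x0 with hxdef
  have hx00 : x 0 = x0 := by simp [hxdef]
  have hgx : ∀ i, g (x i) = x (i+1) := by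
    intro i
    simp only [hxdef]
    rw [pow_succ']
    rfl
  have hfix0 : ∀ i, g (x i) = x i → x i = x0 := by
    intro i
    induction i with
    | zero => intro _; exact hx00
    | succ i ih =>
      intro h
      have h1 := hgx i
      have h2 : g (g (x i)) = g (x i) := by rw [h1]; exact h
      have h3 : g (x i) = x i := g.injective h2
      rw [← h1, h3]
      exact ih h3
  have hper : ∀ i j, i < j → x i = x j → (g ^ (j - i)) x0 = x0 := by
    intro i j hij he
    have h1 : (g ^ (j - i) * g ^ i) x0 = (g ^ i) x0 := by
      rw [← pow_add]
      have h2 : j - i + i = j := by omega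
      rw [h2]
      exact he.symm
    have h2 : (g ^ i) ((g ^ (j - i)) x0) = (g ^ i) x0 := by
      rw [← Equiv.Perm.mul_apply, pow_mul_comm]
      exact h1
    exact (g ^ i).injective h2
  have hex : ∃ k, 0 < k ∧ (g ^ k) x0 = x0 := by
    have hfin : (insert x0 {y | g y ≠ y}).Finite := hfs.insert x0
    have hmem : Set.MapsTo x Set.univ (insert x0 {y | g y ≠ y}) := by
      intro i _
      by_cases h : g (x i) = x i
      · exact Set.mem_insert_iff.mpr (Or.inl (hfix0 i h))
      · exact Set.mem_insert_iff.mpr (Or.inr h)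
    obtain ⟨i, -, j, -, hij, hxeq⟩ :=
      Set.infinite_univ.exists_ne_map_eq_of_mapsTo hmem hfin
    rcases Nat.lt_or_ge i j with h | h
    · exact ⟨j - i, by omega, hper i j h hxeq⟩
    · exact ⟨i - j, by omega, hper j i (by omega) hxeq.symm⟩
  set m := Nat.find hex with hmdef
  have hm := Nat.find_spec hex
  have hmin : ∀ k, k < m → ¬(0 < k ∧ (g ^ k) x0 = x0) := fun k hk => Nat.find_min hex hk
  have hm0 : 0 < m := hm.1
  have hgm : (g ^ m) x0 = x0 := hm.2
  have hxm0 : x m = x 0 := by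
    simp only [hxdef, pow_zero]
    rw [hgm]
    rfl
  have xne : ∀ i j, i < m → j < m → i ≠ j → x i ≠ x j := by
    have key : ∀ i j, i < j → j < m → x i ≠ x j := by
      intro i j hij hj he
      exact hmin (j - i) (by omega) ⟨by omega, hper i j hij he⟩
    intro i j hi hj hne he
    rcases Nat.lt_or_ge i j with h | h
    · exact key i j h hj he
    · exact key j i (by omega) hi he.symm
  have hshift : ∀ c, x (c + m) = x c := by
    intro c
    simp only [hxdef]
    rw [pow_add, Equiv.Perm.mul_apply, hgm]
  have hm2 : 2 ≤ m := by
    rcases Nat.lt_or_ge m 2 with h | h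
    · exfalso
      have h1 : m = 1 := by omega
      rw [h1, pow_one] at hgm
      exact hx0ne hgm
    · exact h
  have hsupp : ∀ y, g y ≠ y → ∃ i, i < m ∧ y = x i := by
    intro y hy
    obtain ⟨k, hk⟩ := hcyc hy
    have hr0 : 0 ≤ k % (m : ℤ) := Int.emod_nonneg k (by exact_mod_cast hm0.ne')
    set r : ℕ := (k % (m : ℤ)).toNat with hr
    have hrm : r < m := by
      have := Int.emod_lt_of_pos k (by exact_mod_cast hm0 : (0:ℤ) < (m:ℤ))
      omega
    refine ⟨r, hrm, ?_⟩
    rw [← hk]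
    have hdecomp : k = (m : ℤ) * (k / (m : ℤ)) + k % (m : ℤ) := (Int.mul_ediv_add_emod k m).symm
    rw [hdecomp, zpow_add, Equiv.Perm.mul_apply]
    rw [show (k % (m : ℤ)) = ((r : ℕ) : ℤ) by omega]
    rw [zpow_natCast]
    have hfix : (g ^ ((m : ℤ) * (k / (m : ℤ)))) ((g ^ r) x0) = (g ^ r) x0 := by
      rw [zpow_mul]
      apply Equiv.Perm.zpow_apply_eq_self_of_apply_eq_self
      rw [zpow_natCast]
      rw [← Equiv.Perm.mul_apply, ← pow_add]
      rw [show m + r = r + m by omega]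
      exact hshift r
    rw [hfix]
  have hout : ∀ y, (∀ i, i < m → y ≠ x i) → g y = y := by
    intro y hy
    by_contra h
    obtain ⟨i, him, he⟩ := hsupp y h
    exact hy i him he
  -- word length facts
  obtain ⟨hQ1, hQ2, hQ3⟩ := QP_prop x m xne (m - 1) (by omega)
  have hQg : QP x (m-1) = g := by
    ext y
    by_cases hy : ∃ i, i < m ∧ y = x i
    · obtain ⟨i, him, rfl⟩ := hy
      rcases Nat.lt_or_ge i (m-1) with h | h
      · rw [hQ1 i h, hgx]
      · have h1 : i = m - 1 := by omega
        subst h1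
        rw [hQ2, hgx, show m - 1 + 1 = m by omega, hxm0]
    · push_neg at hy
      rw [hQ3 y (fun i hi => hy i (by omega)), hout y hy]
  have hm1S : m - 1 ∈ {k | ∃ l : List (Equiv.Perm ℕ),
      l.length = k ∧ (∀ τ ∈ l, τ.IsSwap) ∧ l.prod = g} := by
    refine ⟨(List.range (m-1)).map fun i => Equiv.swap (x 0) (x (m-1-i)), by simp, ?_, hQg⟩
    intro τ hτ
    simp only [List.mem_map, List.mem_range] at hτ
    obtain ⟨i, hi, rfl⟩ := hτ
    exact ⟨x 0, x (m-1-i), xne 0 (m-1-i) (by omega) (by omega) (by omega), rfl⟩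
  have h2nS : 2 * n ∈ {k | ∃ l : List (Equiv.Perm ℕ),
      l.length = k ∧ (∀ τ ∈ l, τ.IsSwap) ∧ l.prod = g} := by
    rw [← hwl]
    exact Nat.sInf_mem ⟨m - 1, hm1S⟩
  have hle1 : 2 * n ≤ m - 1 := by
    rw [← hwl]
    exact Nat.sInf_le hm1S
  obtain ⟨l, hlen, hlsw, hlprod⟩ := h2nS
  have hlr := list_rank l hlsw
  rw [hlprod] at hlr
  obtain ⟨hfd, hfr⟩ := hlr
  haveI := hfd
  have hle2 : m - 1 ≤ 2 * n := by
    have hrl := rank_lower g (m-1) x (fun i j hi hj => xne i j (by omega) (by omega))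
      (fun j _ => hgx j)
    omega
  have hmeq : m = 2*n + 1 := by omega
  have hn1 : 1 ≤ n := by omega
  -- the two factors
  set ua : ℕ → ℕ := fun i => if i = 0 then 0 else i + 1 with hua
  set va : ℕ → ℕ := fun i => if i = 0 then 1 else 2*n + 1 - i with hva
  set a : Equiv.Perm ℕ := PS n (fun i => x (ua i)) (fun i => x (va i)) with ha
  set b : Equiv.Perm ℕ := PS n (fun i => x (i+1)) (fun i => x (2*n - i)) with hb
  have hdA : Dist n (fun i => x (ua i)) (fun i => x (va i)) := by
    intro i j hi hj
    refine ⟨?_, fun hij => ⟨?_, ?_⟩⟩ <;>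
      (apply xne <;> (simp only [hua, hva]; split_ifs <;> omega))
  have hdB : Dist n (fun i => x (i+1)) (fun i => x (2*n - i)) := by
    intro i j hi hj
    refine ⟨?_, fun hij => ⟨?_, ?_⟩⟩ <;> (apply xne <;> omega)
  have hxm1 : x (2*n+1) = x 0 := by rw [← hmeq]; exact hxm0
  have hBv : ∀ j, j ≤ 2*n → b (x j) = x (2*n + 1 - j) := by
    intro j hj
    rcases eq_or_ne j 0 with rfl | hj0
    · rw [hb, PS_fix, Nat.sub_zero, hxm1]
      intro i hi
      exact ⟨xne 0 (i+1) (by omega) (by omega) (by omega),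
        xne 0 (2*n-i) (by omega) (by omega) (by omega)⟩
    · rcases Nat.lt_or_ge j (n+1) with hjn | hjn
      · obtain ⟨i, rfl⟩ : ∃ i, j = i + 1 := ⟨j - 1, by omega⟩
        rw [hb, (PS_eval hdB (show i < n by omega)).1]
        congr 1
        omega
      · rw [hb, show x j = x (2*n - (2*n - j)) from by congr 1; omega,
          (PS_eval hdB (show 2*n - j < n by omega)).2]
        congr 1
        omega
  have hAv0 : a (x 0) = x 1 := by
    rw [ha]
    have h := (PS_eval hdA (show 0 < n by omega)).1
    simpa [hua, hva] using h
  have hAv : ∀ j, 1 ≤ j → j ≤ 2*n → a (x j) = x (2*n + 2 - j) := by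
    intro j hj1 hj2
    rcases eq_or_ne j 1 with rfl | hj1'
    · rw [ha]
      have h := (PS_eval hdA (show 0 < n by omega)).2
      simp only [hua, hva, if_pos rfl] at h
      rw [h, show 2*n+2-1 = 2*n+1 by omega, hxm1]
    · rcases Nat.lt_or_ge j (n+1) with hjn | hjn
      · obtain ⟨i, rfl⟩ : ∃ i, j = i + 1 := ⟨j - 1, by omega⟩
        have hi0 : ¬(i = 0) := by omega
        have h := (PS_eval hdA (show i < n by omega)).1
        simp only [hua, hva, if_neg hi0] at h
        rw [ha, h]
        congr 1
        omega
      · rcases eq_or_ne j (n+1) with rfl | hjn'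
        · rw [ha, PS_fix, show 2*n+2-(n+1) = n+1 by omega]
          intro i hi
          constructor
          · simp only [hua]
            split_ifs with h0
            · exact xne (n+1) 0 (by omega) (by omega) (by omega)
            · exact xne (n+1) (i+1) (by omega) (by omega) (by omega)
          · simp only [hva]
            split_ifs with h0
            · exact xne (n+1) 1 (by omega) (by omega) (by omega)
            · exact xne (n+1) (2*n+1-i) (by omega) (by omega) (by omega)
        · have hi0 : ¬(2*n+1-j = 0) := by omega
          have h := (PS_eval hdA (show 2*n+1-j < n by omega)).2
          simp only [hua, hva, if_neg hi0] at h
          rw [ha, show x j = x (2*n+1-(2*n+1-j)) from by congr 1; omega, h]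
          congr 1
          omega
  have hfinal : a * b = g := by
    ext y
    rw [Equiv.Perm.mul_apply]
    by_cases hy : ∃ i, i < m ∧ y = x i
    · obtain ⟨j, hjm, rfl⟩ := hy
      rw [hBv j (by omega)]
      rcases eq_or_ne j 0 with rfl | hj0
      · rw [Nat.sub_zero, hxm1, hAv0, hgx]
      · rw [hAv (2*n+1-j) (by omega) (by omega), hgx]
        congr 1
        omega
    · push_neg at hy
      have hb' : b y = y := by
        rw [hb]
        apply PS_fix
        intro i hi
        exact ⟨hy (i+1) (by omega), hy (2*n-i) (by omega)⟩
      have ha' : a y = y := by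
        rw [ha]
        apply PS_fix
        intro i hi
        constructor
        · simp only [hua]
          split_ifs
          · exact hy 0 (by omega)
          · exact hy (i+1) (by omega)
        · simp only [hva]
          split_ifs
          · exact hy 1 (by omega)
          · exact hy (2*n+1-i) (by omega)
      rw [hb', ha', hout y hy]
  refine ⟨a, b, ?_, ?_, hfinal⟩
  · rw [ha]
    exact conjS_PS n _ _ hdA
  · rw [hb]
    exact conjS_PS n _ _ hdB
end

section
/- Any cyclic permutation in S_∞ of word length 2n+1 (i.e., any (2n+2)-cycle) can be written as a product of two permutations, one conjugate to ι_n and the other conjugate to ι_{n+1} in S_∞ (in some order). -/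
namespace Stmt13Aux

open Equiv Equiv.Perm

lemma finSupp_one : FinSupp 1 := by simp [FinSupp]

lemma finSupp_swap (a b : ℕ) : FinSupp (Equiv.swap a b) := by
  apply Set.Finite.subset ((Set.finite_singleton b).insert a)
  intro x hx
  simp only [Set.mem_setOf_eq] at hx
  have := Equiv.swap_apply_ne_self_iff.mp hx
  rcases this.2 with h | h <;> simp [h]

lemma finSupp_mul {f g : Equiv.Perm ℕ} (hf : FinSupp f) (hg : FinSupp g) :
    FinSupp (f * g) := by
  apply Set.Finite.subset (hf.union hg)
  intro x hx
  simp only [Set.mem_setOf_eq, Equiv.Perm.mul_apply] at hx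
  by_cases h : g x = x
  · left; rw [h] at hx; exact hx
  · right; exact h

lemma finSupp_prod (l : List (Equiv.Perm ℕ)) (h : ∀ τ ∈ l, FinSupp τ) :
    FinSupp l.prod := by
  induction l with
  | nil => simpa using finSupp_one
  | cons τ l ih =>
    rw [List.prod_cons]
    exact finSupp_mul (h τ (by simp)) (ih (fun σ hσ => h σ (by simp [hσ])))

/-- evaluation of a product of pairwise disjoint swaps -/
lemma swapProd_spec (r : ℕ) (u v : ℕ → ℕ)
    (hd : ∀ i, i < r → ∀ j, j < r →
      (u i = u j → i = j) ∧ (v i = v j → i = j) ∧ u i ≠ v j) :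
    (∀ i, i < r → (((List.range r).map fun i => Equiv.swap (u i) (v i)).prod (u i) = v i ∧
        ((List.range r).map fun i => Equiv.swap (u i) (v i)).prod (v i) = u i)) ∧
      (∀ y, (∀ i, i < r → y ≠ u i ∧ y ≠ v i) →
        ((List.range r).map fun i => Equiv.swap (u i) (v i)).prod y = y) := by
  induction r with
  | zero => simp
  | succ r ih =>
    have hd' : ∀ i, i < r → ∀ j, j < r →
        (u i = u j → i = j) ∧ (v i = v j → i = j) ∧ u i ≠ v j := by
      intro i hi j hj; exact hd i (by omega) j (by omega)
    obtain ⟨ihev, ihfix⟩ := ih hd'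
    have hsplit : ((List.range (r+1)).map fun i => Equiv.swap (u i) (v i)).prod
        = ((List.range r).map fun i => Equiv.swap (u i) (v i)).prod * Equiv.swap (u r) (v r) := by
      rw [List.range_succ, List.map_append, List.prod_append]; simp
    constructor
    · intro i hi
      rcases Nat.lt_succ_iff_lt_or_eq.mp hi with hi' | hieq
      · constructor
        · rw [hsplit, Equiv.Perm.mul_apply, Equiv.swap_apply_of_ne_of_ne, (ihev i hi').1]
          · intro h; exact absurd ((hd i (by omega) r (by omega)).1 h) (by omega)
          · exact (hd i (by omega) r (by omega)).2.2
        · rw [hsplit, Equiv.Perm.mul_apply, Equiv.swap_apply_of_ne_of_ne, (ihev i hi').2]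
          · exact fun h => (hd r (by omega) i (by omega)).2.2 h.symm
          · intro h; exact absurd ((hd i (by omega) r (by omega)).2.1 h) (by omega)
      · subst hieq
        constructor
        · rw [hsplit, Equiv.Perm.mul_apply, Equiv.swap_apply_left]
          apply ihfix
          intro j hj
          refine ⟨fun h => (hd j (by omega) i (by omega)).2.2 h.symm, fun h => ?_⟩
          exact absurd ((hd i (by omega) j (by omega)).2.1 h) (by omega)
        · rw [hsplit, Equiv.Perm.mul_apply, Equiv.swap_apply_right]
          apply ihfix
          intro j hj
          refine ⟨fun h => ?_, fun h => (hd i (by omega) j (by omega)).2.2 h⟩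
          exact absurd ((hd i (by omega) j (by omega)).1 h) (by omega)
    · intro y hy
      rw [hsplit, Equiv.Perm.mul_apply, Equiv.swap_apply_of_ne_of_ne
        (hy r (by omega)).1 (hy r (by omega)).2]
      exact ihfix y (fun i hi => hy i (by omega))

/-- evaluation of the chain product realizing a cycle -/
lemma chainProd_spec (k : ℕ) (v : ℕ → ℕ)
    (hinj : ∀ i, i ≤ k → ∀ j, j ≤ k → v i = v j → i = j) :
    (∀ i, i < k → ((List.range k).map fun i => Equiv.swap (v i) (v (i+1))).prod (v i) = v (i+1)) ∧
      ((List.range k).map fun i => Equiv.swap (v i) (v (i+1))).prod (v k) = v 0 ∧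
      (∀ y, (∀ i, i ≤ k → y ≠ v i) →
        ((List.range k).map fun i => Equiv.swap (v i) (v (i+1))).prod y = y) := by
  induction k with
  | zero => simp
  | succ k ih =>
    have hinj' : ∀ i, i ≤ k → ∀ j, j ≤ k → v i = v j → i = j := by
      intro i hi j hj; exact hinj i (by omega) j (by omega)
    obtain ⟨ih1, ih2, ih3⟩ := ih hinj'
    have hsplit : ((List.range (k+1)).map fun i => Equiv.swap (v i) (v (i+1))).prod
        = ((List.range k).map fun i => Equiv.swap (v i) (v (i+1))).prod
          * Equiv.swap (v k) (v (k+1)) := by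
      rw [List.range_succ, List.map_append, List.prod_append]; simp
    refine ⟨?_, ?_, ?_⟩
    · intro i hi
      rcases Nat.lt_succ_iff_lt_or_eq.mp hi with hi' | hieq
      · rw [hsplit, Equiv.Perm.mul_apply, Equiv.swap_apply_of_ne_of_ne, ih1 i hi']
        · intro h; exact absurd (hinj i (by omega) k (by omega) h) (by omega)
        · intro h; exact absurd (hinj i (by omega) (k+1) (by omega) h) (by omega)
      · subst hieq
        rw [hsplit, Equiv.Perm.mul_apply, Equiv.swap_apply_left]
        apply ih3
        intro j hj h
        exact absurd (hinj (i+1) (by omega) j (by omega) h) (by omega)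
    · rw [hsplit, Equiv.Perm.mul_apply, Equiv.swap_apply_right]
      exact ih2
    · intro y hy
      rw [hsplit, Equiv.Perm.mul_apply, Equiv.swap_apply_of_ne_of_ne
        (hy k (by omega)) (hy (k+1) (by omega))]
      exact ih3 y (fun i hi => hy i (by omega))

/-- extend a partial injection to a finitely supported permutation -/
lemma extend_perm (r : ℕ) (u f : ℕ → ℕ)
    (hu : ∀ i, i < r → ∀ j, j < r → u i = u j → i = j)
    (hf : ∀ i, i < r → ∀ j, j < r → f i = f j → i = j) :
    ∃ c : Equiv.Perm ℕ, FinSupp c ∧ ∀ i, i < r → c (u i) = f i := by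
  induction r with
  | zero => exact ⟨1, finSupp_one, by simp⟩
  | succ r ih =>
    obtain ⟨c, hcfs, hc⟩ := ih (fun i hi j hj => hu i (by omega) j (by omega))
      (fun i hi j hj => hf i (by omega) j (by omega))
    refine ⟨Equiv.swap (c (u r)) (f r) * c, finSupp_mul (finSupp_swap _ _) hcfs, ?_⟩
    intro i hi
    rcases Nat.lt_succ_iff_lt_or_eq.mp hi with hi' | hieq
    · rw [Equiv.Perm.mul_apply, hc i hi', Equiv.swap_apply_of_ne_of_ne]
      · intro h
        rw [← hc i hi'] at h
        exact absurd (hu i (by omega) r (by omega) (c.injective h)) (by omega)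
      · intro h; exact absurd (hf i (by omega) r (by omega) h) (by omega)
    · subst hieq
      rw [Equiv.Perm.mul_apply, Equiv.swap_apply_left]

/-- conjugating a product of swaps -/
lemma conj_swapProd (c : Equiv.Perm ℕ) (r : ℕ) (p q : ℕ → ℕ) :
    c * ((List.range r).map fun i => Equiv.swap (p i) (q i)).prod * c⁻¹
      = ((List.range r).map fun i => Equiv.swap (c (p i)) (c (q i))).prod := by
  induction r with
  | zero => simp
  | succ r ih =>
    rw [List.range_succ, List.map_append, List.prod_append, List.map_append, List.prod_append]
    simp only [List.map_cons, List.map_nil, List.prod_cons, List.prod_nil, mul_one]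
    rw [Equiv.swap_apply_apply, ← ih]
    group



lemma wl_list (g : Equiv.Perm ℕ) (m : ℕ) (h : wl g = m) (hm : m ≠ 0) :
    ∃ l : List (Equiv.Perm ℕ), l.length = m ∧ (∀ τ ∈ l, τ.IsSwap) ∧ l.prod = g := by
  have hne : {n | ∃ l : List (Equiv.Perm ℕ),
      l.length = n ∧ (∀ τ ∈ l, τ.IsSwap) ∧ l.prod = g}.Nonempty := by
    by_contra hcon
    rw [Set.not_nonempty_iff_eq_empty] at hcon
    rw [wl, hcon, Nat.sInf_empty] at h
    exact hm h.symm
  have := Nat.sInf_mem hne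
  rw [← wl, h] at this
  exact this

lemma wl_le (g : Equiv.Perm ℕ) (l : List (Equiv.Perm ℕ)) (hs : ∀ τ ∈ l, τ.IsSwap)
    (hp : l.prod = g) : wl g ≤ l.length :=
  Nat.sInf_le ⟨l, rfl, hs, hp⟩

/-- structure of a finitely supported cycle -/
lemma cycle_structure (g : Equiv.Perm ℕ) (hfs : FinSupp g) (hc : g.IsCycle) :
    ∃ (k : ℕ) (v : ℕ → ℕ), 2 ≤ k ∧
      (∀ i, i < k → ∀ j, j < k → v i = v j → i = j) ∧
      (∀ i, g (v i) = v (i+1)) ∧ (v k = v 0) ∧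
      ({x | g x ≠ x} = v '' Set.Iio k) := by
  obtain ⟨x₀, hx₀, hall⟩ := hc
  set v : ℕ → ℕ := fun i => (g ^ i) x₀ with hv
  have horb : ∀ i : ℕ, g (v i) ≠ v i := by
    intro i h
    apply hx₀
    have : (g ^ i) (g x₀) = (g ^ i) x₀ := by
      have hcomm : g * g ^ i = g ^ i * g := (Commute.self_pow g i).eq
      calc (g ^ i) (g x₀) = (g ^ i * g) x₀ := rfl
        _ = (g * g ^ i) x₀ := by rw [← hcomm]
        _ = (g ^ i) x₀ := h
    exact (g ^ i).injective this
  have hperiodic : x₀ ∈ Function.periodicPts ⇑g := by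
    have hmaps : ∀ i : ℕ, v i ∈ {x | g x ≠ x} := fun i => horb i
    have hfin : Finite {x : ℕ | g x ≠ x} := hfs
    obtain ⟨i, j, hij, heq⟩ :=
      Finite.exists_ne_map_eq_of_infinite (fun i : ℕ => (⟨v i, hmaps i⟩ : {x | g x ≠ x}))
    have heq' : v i = v j := congrArg Subtype.val heq
    rcases Nat.lt_or_ge i j with hlt | hge
    · refine ⟨j - i, by omega, ?_⟩
      have : (g ^ (j - i)) ((g ^ i) x₀) = (g ^ i) x₀ := by
        rw [← Equiv.Perm.mul_apply, ← pow_add]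
        have : j - i + i = j := by omega
        rw [this]; exact heq'.symm
      have h2 : (g ^ i) ((g ^ (j-i)) x₀) = (g ^ i) x₀ := by
        rw [← Equiv.Perm.mul_apply, ← pow_add, add_comm, pow_add, Equiv.Perm.mul_apply, this]
      have h3 := (g ^ i).injective h2
      show Function.IsPeriodicPt (⇑g) (j-i) x₀
      rw [Function.IsPeriodicPt, Function.IsFixedPt, Equiv.Perm.iterate_eq_pow, h3]
    · have hlt : j < i := by omega
      refine ⟨i - j, by omega, ?_⟩
      have : (g ^ (i - j)) ((g ^ j) x₀) = (g ^ j) x₀ := by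
        rw [← Equiv.Perm.mul_apply, ← pow_add]
        have : i - j + j = i := by omega
        rw [this]; exact heq'
      have h2 : (g ^ j) ((g ^ (i-j)) x₀) = (g ^ j) x₀ := by
        rw [← Equiv.Perm.mul_apply, ← pow_add, add_comm, pow_add, Equiv.Perm.mul_apply, this]
      have h3 := (g ^ j).injective h2
      show Function.IsPeriodicPt (⇑g) (i-j) x₀
      rw [Function.IsPeriodicPt, Function.IsFixedPt, Equiv.Perm.iterate_eq_pow, h3]
  set k := Function.minimalPeriod (⇑g) x₀ with hk
  have hkpos : 0 < k := Function.minimalPeriod_pos_of_mem_periodicPts hperiodic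
  have hvk : v k = v 0 := by
    have := Function.isPeriodicPt_minimalPeriod (⇑g) x₀
    rw [Function.IsPeriodicPt, Function.IsFixedPt, Equiv.Perm.iterate_eq_pow] at this
    simpa [hv] using this
  have hinj : ∀ i, i < k → ∀ j, j < k → v i = v j → i = j := by
    intro i hi j hj hij
    apply Function.iterate_injOn_Iio_minimalPeriod (Set.mem_Iio.mpr hi) (Set.mem_Iio.mpr hj)
    simpa [Equiv.Perm.iterate_eq_pow] using hij
  have hk2 : 2 ≤ k := by
    by_contra hcon
    push_neg at hcon
    have hk1 : k = 1 := by omega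
    apply hx₀
    have h5 := hvk
    rw [hk1] at h5
    simpa [hv, pow_one] using h5
  refine ⟨k, v, hk2, hinj, fun i => ?_, hvk, ?_⟩
  · show g ((g ^ i) x₀) = (g ^ (i+1)) x₀
    rw [pow_succ, Equiv.Perm.mul_apply]
    have hcomm : g * g ^ i = g ^ i * g := (Commute.self_pow g i).eq
    calc g ((g ^ i) x₀) = (g * g ^ i) x₀ := rfl
      _ = (g ^ i * g) x₀ := by rw [hcomm]
      _ = (g ^ i) (g x₀) := rfl
  · apply Set.eq_of_subset_of_subset
    · intro y hy
      obtain ⟨i, hi⟩ := hall hy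
      have hzk : (g ^ (k:ℤ)) x₀ = x₀ := by
        rw [zpow_natCast]; exact hvk
      have hred : ∀ m : ℤ, (g ^ m) x₀ = (g ^ (m.emod k).toNat) x₀ := by
        intro m
        have hdecomp : m = k * (m.ediv k) + m.emod k := (Int.mul_ediv_add_emod m k).symm
        have hsplit : g ^ m = g ^ (m.emod k) * g ^ ((k:ℤ) * m.ediv k) := by
          rw [← zpow_add]
          congr 1
          linarith [hdecomp]
        rw [hsplit, Equiv.Perm.mul_apply]
        have hfix : (g ^ ((k:ℤ) * m.ediv k)) x₀ = x₀ := by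
          rw [zpow_mul]
          exact Equiv.Perm.zpow_apply_eq_self_of_apply_eq_self hzk _
        rw [hfix]
        congr 1
        have hnn : 0 ≤ m.emod k := Int.emod_nonneg m (by exact_mod_cast hkpos.ne')
        rw [← zpow_natCast, Int.toNat_of_nonneg hnn]
      have hilt : ((i.emod k).toNat) < k := by
        have h1 : i.emod k < (k : ℤ) := Int.emod_lt_of_pos i (by exact_mod_cast hkpos)
        have h2 : 0 ≤ i.emod k := Int.emod_nonneg i (by exact_mod_cast hkpos.ne')
        omega
      exact ⟨(i.emod k).toNat, Set.mem_Iio.mpr hilt, by rw [hv]; rw [hred i] at hi; exact hi⟩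
    · rintro y ⟨i, hi, rfl⟩
      exact horb i



/-- the same-cycle setoid restricted to a subset -/
def sc (σ : Equiv.Perm ℕ) (S : Set ℕ) : Setoid ↥S :=
  ⟨fun x y => σ.SameCycle ↑x ↑y,
   ⟨fun x => Equiv.Perm.SameCycle.refl σ ↑x, fun h => h.symm, fun h1 h2 => h1.trans h2⟩⟩

lemma count_one (S : Set ℕ) :
    Nat.card (Quotient (sc 1 S)) = Nat.card ↥S := by
  symm
  apply Nat.card_eq_of_bijective (fun x : ↥S => (Quotient.mk (sc 1 S) x))
  constructor
  · intro x y hxy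
    have := Quotient.exact hxy
    have h2 : (1 : Equiv.Perm ℕ).SameCycle ↑x ↑y := this
    rw [Equiv.Perm.sameCycle_one] at h2
    exact Subtype.ext h2
  · intro q
    obtain ⟨x, rfl⟩ := Quotient.exists_rep q
    exact ⟨x, rfl⟩

lemma count_swap_mul (S : Set ℕ) (hS : S.Finite) (σ : Equiv.Perm ℕ) (a b : ℕ)
    (ha : a ∈ S) (hb : b ∈ S) :
    Nat.card (Quotient (sc σ S)) ≤ Nat.card (Quotient (sc (Equiv.swap a b * σ) S)) + 1 := by
  classical
  haveI := hS.to_subtype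
  set τ : Equiv.Perm ℕ := Equiv.swap a b with hτ
  set A : Set ℕ := {x | σ.SameCycle a x ∨ σ.SameCycle b x} with hA
  have haA : a ∈ A := Or.inl (Equiv.Perm.SameCycle.refl σ a)
  have hbA : b ∈ A := Or.inr (Equiv.Perm.SameCycle.refl σ b)
  have hstep : ∀ x, σ x ∈ A ↔ x ∈ A := by
    intro x
    have h1 : σ.SameCycle x (σ x) := ⟨1, by simp⟩
    constructor
    · rintro (h | h)
      · exact Or.inl (h.trans h1.symm)
      · exact Or.inr (h.trans h1.symm)
    · rintro (h | h)
      · exact Or.inl (h.trans h1)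
      · exact Or.inr (h.trans h1)
  have hswapA : ∀ x ∈ A, τ x ∈ A := by
    intro x hx
    by_cases hxa : x = a
    · rw [hτ, hxa, Equiv.swap_apply_left]; exact hbA
    · by_cases hxb : x = b
      · rw [hτ, hxb, Equiv.swap_apply_right]; exact haA
      · rw [hτ, Equiv.swap_apply_of_ne_of_ne hxa hxb]; exact hx
  have hτσA : ∀ x ∈ A, (τ * σ) x ∈ A := fun x hx =>
    hswapA _ ((hstep x).mpr hx)
  have hτσA' : ∀ x ∈ A, (τ * σ)⁻¹ x ∈ A := by
    intro x hx
    rw [mul_inv_rev, Equiv.Perm.mul_apply]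
    have hτx : τ x ∈ A := hswapA x hx
    have h3 : σ (σ⁻¹ (τ x)) ∈ A ↔ σ⁻¹ (τ x) ∈ A := hstep _
    rw [show ∀ z, σ (σ⁻¹ z) = z from fun z => σ.apply_symm_apply z] at h3
    have hτinv : τ⁻¹ = τ := by rw [hτ, Equiv.swap_inv]
    rw [hτinv]
    exact h3.mp hτx
  have houtside : ∀ x ∉ A, (τ * σ) x = σ x := by
    intro x hx
    have hσx : σ x ∉ A := fun h => hx ((hstep x).mp h)
    rw [Equiv.Perm.mul_apply, hτ, Equiv.swap_apply_of_ne_of_ne]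
    · intro h; apply hσx; rw [h]; exact haA
    · intro h; apply hσx; rw [h]; exact hbA
  have houtside' : ∀ x ∉ A, (τ * σ)⁻¹ x = σ⁻¹ x := by
    intro x hx
    rw [mul_inv_rev, Equiv.Perm.mul_apply]
    have hτinv : τ⁻¹ = τ := by rw [hτ, Equiv.swap_inv]
    rw [hτinv, hτ, Equiv.swap_apply_of_ne_of_ne]
    · intro h; apply hx; rw [h]; exact haA
    · intro h; apply hx; rw [h]; exact hbA
  have hout_inv : ∀ x ∉ A, σ⁻¹ x ∉ A := by
    intro x hx h
    have h2 := (hstep (σ⁻¹ x)).mpr h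
    rw [show ∀ z, σ (σ⁻¹ z) = z from fun z => σ.apply_symm_apply z] at h2
    exact hx h2
  have hpow : ∀ m : ℕ, ∀ x ∉ A, ((τ * σ) ^ m) x = (σ ^ m) x ∧ (σ ^ m) x ∉ A := by
    intro m
    induction m with
    | zero => intro x hx; simpa using hx
    | succ m ih =>
      intro x hx
      obtain ⟨h1, h2⟩ := ih x hx
      have hA2 : σ ((σ ^ m) x) ∉ A := fun h => h2 ((hstep _).mp h)
      constructor
      · calc ((τ * σ) ^ (m+1)) x = (τ * σ) (((τ * σ) ^ m) x) := by rw [pow_succ']; rfl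
          _ = (τ * σ) ((σ ^ m) x) := by rw [h1]
          _ = σ ((σ ^ m) x) := houtside _ h2
          _ = (σ ^ (m+1)) x := by rw [pow_succ']; rfl
      · have : (σ ^ (m+1)) x = σ ((σ ^ m) x) := by rw [pow_succ']; rfl
        rw [this]; exact hA2
  have hpow' : ∀ m : ℕ, ∀ x ∉ A, (((τ * σ)⁻¹) ^ m) x = ((σ⁻¹) ^ m) x ∧ ((σ⁻¹) ^ m) x ∉ A := by
    intro m
    induction m with
    | zero => intro x hx; simpa using hx
    | succ m ih =>
      intro x hx
      obtain ⟨h1, h2⟩ := ih x hx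
      have hA2 : σ⁻¹ (((σ⁻¹) ^ m) x) ∉ A := hout_inv _ h2
      constructor
      · calc (((τ * σ)⁻¹) ^ (m+1)) x = (τ * σ)⁻¹ ((((τ * σ)⁻¹) ^ m) x) := by
              rw [pow_succ']; rfl
          _ = (τ * σ)⁻¹ (((σ⁻¹) ^ m) x) := by rw [h1]
          _ = σ⁻¹ (((σ⁻¹) ^ m) x) := houtside' _ h2
          _ = ((σ⁻¹) ^ (m+1)) x := by rw [pow_succ']; rfl
      · have : ((σ⁻¹) ^ (m+1)) x = σ⁻¹ (((σ⁻¹) ^ m) x) := by rw [pow_succ']; rfl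
        rw [this]; exact hA2
  have hsame : ∀ x, x ∉ A → ∀ y, (σ.SameCycle x y ↔ (τ * σ).SameCycle x y) := by
    intro x hx y
    constructor
    · rintro ⟨i, hi⟩
      rcases i with m | m
      · refine ⟨Int.ofNat m, ?_⟩
        rw [Int.ofNat_eq_coe, zpow_natCast] at hi ⊢
        rw [(hpow m x hx).1]
        exact hi
      · refine ⟨Int.negSucc m, ?_⟩
        rw [zpow_negSucc, ← inv_pow] at hi ⊢
        rw [(hpow' (m+1) x hx).1]
        exact hi
    · rintro ⟨i, hi⟩
      rcases i with m | m
      · refine ⟨Int.ofNat m, ?_⟩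
        rw [Int.ofNat_eq_coe, zpow_natCast] at hi ⊢
        rw [(hpow m x hx).1] at hi
        exact hi
      · refine ⟨Int.negSucc m, ?_⟩
        rw [zpow_negSucc, ← inv_pow] at hi ⊢
        rw [(hpow' (m+1) x hx).1] at hi
        exact hi
  have hAzpow : ∀ x ∈ A, ∀ i : ℤ, ((τ * σ) ^ i) x ∈ A := by
    have hn : ∀ m : ℕ, ∀ x ∈ A, ((τ * σ) ^ m) x ∈ A := by
      intro m
      induction m with
      | zero => intro x hx; simpa using hx
      | succ m ih =>
        intro x hx
        have : ((τ * σ) ^ (m+1)) x = ((τ * σ) ^ m) ((τ * σ) x) := by rw [pow_succ]; rfl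
        rw [this]
        exact ih _ (hτσA x hx)
    have hn' : ∀ m : ℕ, ∀ x ∈ A, (((τ * σ)⁻¹) ^ m) x ∈ A := by
      intro m
      induction m with
      | zero => intro x hx; simpa using hx
      | succ m ih =>
        intro x hx
        have : (((τ * σ)⁻¹) ^ (m+1)) x = (((τ * σ)⁻¹) ^ m) ((τ * σ)⁻¹ x) := by
          rw [pow_succ]; rfl
        rw [this]
        exact ih _ (hτσA' x hx)
    intro x hx i
    rcases i with m | m
    · rw [Int.ofNat_eq_coe, zpow_natCast]; exact hn m x hx
    · rw [zpow_negSucc, ← inv_pow]; exact hn' (m+1) x hx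
  have hL2 : ∀ x, (τ * σ).SameCycle a x → x ∈ A := by
    rintro x ⟨i, hi⟩
    rw [← hi]
    exact hAzpow a haA i
  -- the injection
  let F : ↥S → (Quotient (sc (τ * σ) S)) ⊕ Unit := fun x =>
    if σ.SameCycle a ↑x then Sum.inr ()
    else if σ.SameCycle b ↑x then Sum.inl (Quotient.mk (sc (τ * σ) S) ⟨a, ha⟩)
    else Sum.inl (Quotient.mk (sc (τ * σ) S) x)
  have hresp : ∀ x y : ↥S, (sc σ S).r x y → F x = F y := by
    intro x y hxy
    have hxy' : σ.SameCycle ↑x ↑y := hxy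
    show F x = F y
    simp only [F]
    by_cases hax : σ.SameCycle a ↑x
    · rw [if_pos hax, if_pos (hax.trans hxy')]
    · have hay : ¬ σ.SameCycle a ↑y := fun h => hax (h.trans hxy'.symm)
      by_cases hbx : σ.SameCycle b ↑x
      · rw [if_neg hax, if_pos hbx, if_neg hay, if_pos (hbx.trans hxy')]
      · have hby : ¬ σ.SameCycle b ↑y := fun h => hbx (h.trans hxy'.symm)
        rw [if_neg hax, if_neg hbx, if_neg hay, if_neg hby]
        have hxA : (↑x : ℕ) ∉ A := fun h => h.elim hax hbx
        exact congrArg Sum.inl (Quotient.sound (((hsame ↑x hxA ↑y).mp hxy')))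
  have hinj : Function.Injective (Quotient.lift F hresp) := by
    intro q1 q2
    induction q1 using Quotient.ind with | _ x =>
    induction q2 using Quotient.ind with | _ y =>
    intro heq
    have heq' : F x = F y := heq
    simp only [F] at heq'
    apply Quotient.sound
    by_cases hax : σ.SameCycle a ↑x <;> by_cases hay : σ.SameCycle a ↑y
    · exact (hax.symm.trans hay : σ.SameCycle ↑x ↑y)
    · rw [if_pos hax, if_neg hay] at heq'
      split at heq' <;> simp at heq'
    · rw [if_neg hax, if_pos hay] at heq'
      split at heq' <;> simp at heq'
    · rw [if_neg hax, if_neg hay] at heq'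
      by_cases hbx : σ.SameCycle b ↑x <;> by_cases hby : σ.SameCycle b ↑y
      · exact (hbx.symm.trans hby : σ.SameCycle ↑x ↑y)
      · rw [if_pos hbx, if_neg hby] at heq'
        simp only [Sum.inl.injEq] at heq'
        have h2 : (τ * σ).SameCycle a ↑y := Quotient.exact heq'
        exact (hL2 _ h2).elim (fun h => absurd h hay) (fun h => absurd h hby)
      · rw [if_neg hbx, if_pos hby] at heq'
        simp only [Sum.inl.injEq] at heq'
        have h2 : (τ * σ).SameCycle a ↑x := Quotient.exact heq'.symm
        exact (hL2 _ h2).elim (fun h => absurd h hax) (fun h => absurd h hbx)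
      · rw [if_neg hbx, if_neg hby] at heq'
        simp only [Sum.inl.injEq] at heq'
        have h2 : (τ * σ).SameCycle ↑x ↑y := Quotient.exact heq'
        have hxA : (↑x : ℕ) ∉ A := fun h => h.elim hax hbx
        exact (hsame ↑x hxA ↑y).mpr h2
  calc Nat.card (Quotient (sc σ S)) ≤ Nat.card ((Quotient (sc (τ * σ) S)) ⊕ Unit) :=
        Nat.card_le_card_of_injective _ hinj
    _ = Nat.card (Quotient (sc (τ * σ) S)) + 1 := by rw [Nat.card_sum]; simp



lemma count_le_of_swaps (S : Set ℕ) (hS : S.Finite) :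
    ∀ l : List (Equiv.Perm ℕ),
      (∀ τ ∈ l, ∃ a b, a ∈ S ∧ b ∈ S ∧ τ = Equiv.swap a b) →
      Nat.card ↥S ≤ Nat.card (Quotient (sc l.prod S)) + l.length := by
  intro l
  induction l with
  | nil =>
    intro _
    simp only [List.prod_nil, List.length_nil, add_zero]
    rw [count_one S]
  | cons τ l ih =>
    intro hl
    obtain ⟨a, b, ha, hb, rfl⟩ := hl τ (by simp)
    have h1 := ih (fun σ hσ => hl σ (by simp [hσ]))
    have h2 := count_swap_mul S hS l.prod a b ha hb
    rw [List.prod_cons, List.length_cons]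
    omega

lemma count_cycle (S : Set ℕ) (hS : S.Finite) (σ : Equiv.Perm ℕ) (hcy : σ.IsCycle)
    (hsub : {x | σ x ≠ x} ⊆ S) :
    Nat.card (Quotient (sc σ S)) ≤ Nat.card ↥S + 1 - {x | σ x ≠ x}.ncard := by
  classical
  haveI := hS.to_subtype
  set M : Set ℕ := {x | σ x ≠ x} with hM
  have hMfin : M.Finite := hS.subset hsub
  haveI := hMfin.to_subtype
  have hfix : ∀ x : ℕ, σ x = x → ∀ i : ℤ, (σ ^ i) x = x :=
    fun x hx i => Equiv.Perm.zpow_apply_eq_self_of_apply_eq_self hx i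
  let F : ↥S → ↥(S \ M) ⊕ Unit := fun x =>
    if h : σ ↑x = ↑x then Sum.inl ⟨↑x, x.2, fun hm => hm h⟩ else Sum.inr ()
  have hresp : ∀ x y : ↥S, (sc σ S).r x y → F x = F y := by
    intro x y hxy
    have hxy' : σ.SameCycle ↑x ↑y := hxy
    show F x = F y
    simp only [F]
    by_cases hx : σ ↑x = ↑x
    · obtain ⟨i, hi⟩ := hxy'
      have : (↑x : ℕ) = ↑y := by rw [← hi, hfix ↑x hx i]
      rw [dif_pos hx]
      have hy : σ ↑y = ↑y := by rw [← this]; exact hx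
      rw [dif_pos hy]
      simp [this]
    · rw [dif_neg hx]
      have hy : ¬ σ ↑y = ↑y := by
        intro hy
        obtain ⟨i, hi⟩ := hxy'.symm
        have : (↑y : ℕ) = ↑x := by rw [← hi, hfix ↑y hy i]
        rw [this] at hy
        exact hx hy
      rw [dif_neg hy]
  have hinj : Function.Injective (Quotient.lift F hresp) := by
    intro q1 q2
    induction q1 using Quotient.ind with | _ x =>
    induction q2 using Quotient.ind with | _ y =>
    intro heq
    have heq' : F x = F y := heq
    simp only [F] at heq'
    apply Quotient.sound
    by_cases hx : σ ↑x = ↑x <;> by_cases hy : σ ↑y = ↑y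
    · rw [dif_pos hx, dif_pos hy] at heq'
      simp only [Sum.inl.injEq, Subtype.mk.injEq] at heq'
      show σ.SameCycle ↑x ↑y
      rw [show (↑x : ℕ) = ↑y from by have := congrArg Subtype.val heq'; exact this]
    · rw [dif_pos hx, dif_neg hy] at heq'; simp at heq'
    · rw [dif_neg hx, dif_pos hy] at heq'; simp at heq'
    · obtain ⟨w, hw, hall⟩ := hcy
      exact ((hall hx).symm.trans (hall hy) : σ.SameCycle ↑x ↑y)
  have hcard : Nat.card (Quotient (sc σ S)) ≤ Nat.card (↥(S \ M) ⊕ Unit) :=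
    Nat.card_le_card_of_injective _ hinj
  have h1 : Nat.card (↥(S \ M) ⊕ Unit) = (S \ M).ncard + 1 := by
    haveI : Finite ↥(S \ M) := (hS.subset Set.diff_subset).to_subtype
    rw [Nat.card_sum]
    simp [Nat.card_coe_set_eq]
  have h2 : (S \ M).ncard = S.ncard - M.ncard := Set.ncard_diff hsub hMfin
  have h3 : M.ncard ≤ S.ncard := Set.ncard_le_ncard hsub hS
  have h4 : Nat.card ↥S = S.ncard := Nat.card_coe_set_eq S
  omega

lemma prod_fix (l : List (Equiv.Perm ℕ)) (x : ℕ) (h : ∀ τ ∈ l, τ x = x) :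
    l.prod x = x := by
  induction l with
  | nil => simp
  | cons τ l ih =>
    rw [List.prod_cons, Equiv.Perm.mul_apply, ih (fun σ hσ => h σ (by simp [hσ])),
      h τ (by simp)]

/-- a cycle that is a product of m transpositions moves at most m+1 points -/
lemma moved_card_le (l : List (Equiv.Perm ℕ)) (hsw : ∀ τ ∈ l, τ.IsSwap)
    (hcy : l.prod.IsCycle) : {x | l.prod x ≠ x}.ncard ≤ l.length + 1 := by
  classical
  set S : Set ℕ := {x | ∃ τ ∈ l, τ x ≠ x} with hS
  have hSfin : S.Finite := by
    have : S = ⋃ τ ∈ l, {x | τ x ≠ x} := by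
      ext x; simp [hS]
    rw [this]
    apply Set.Finite.biUnion (List.finite_toSet l)
    intro τ hτ
    obtain ⟨a, b, hab, rfl⟩ := hsw τ hτ
    apply Set.Finite.subset ((Set.finite_singleton b).insert a)
    intro x hx
    have := Equiv.swap_apply_ne_self_iff.mp hx
    rcases this.2 with h | h <;> simp [h]
  have hsub : {x | l.prod x ≠ x} ⊆ S := by
    intro x hx
    by_contra hcon
    apply hx
    apply prod_fix
    intro τ hτ
    by_contra hτx
    exact hcon ⟨τ, hτ, hτx⟩
  have hswS : ∀ τ ∈ l, ∃ a b, a ∈ S ∧ b ∈ S ∧ τ = Equiv.swap a b := by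
    intro τ hτ
    obtain ⟨a, b, hab, rfl⟩ := hsw τ hτ
    refine ⟨a, b, ⟨_, hτ, ?_⟩, ⟨_, hτ, ?_⟩, rfl⟩
    · rw [Equiv.swap_apply_left]; exact Ne.symm hab
    · rw [Equiv.swap_apply_right]; exact hab
  have h1 := count_le_of_swaps S hSfin l hswS
  have h2 := count_cycle S hSfin l.prod hcy hsub
  have h3 : {x | l.prod x ≠ x}.ncard ≤ S.ncard := Set.ncard_le_ncard hsub hSfin
  have h4 : Nat.card ↥S = S.ncard := Nat.card_coe_set_eq S
  omega

end Stmt13Aux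

/-- a cyclic permutation of word length `2n+1` is a product of two
permutations, one `S_∞`-conjugate to `ι_n` and the other to `ι_{n+1}` (in some order). -/
theorem stmt13 (g : Equiv.Perm ℕ) (hfs : FinSupp g) (hc : g.IsCycle) (n : ℕ)
    (hwl : wl g = 2 * n + 1) :
    ∃ a b : Equiv.Perm ℕ, a * b = g ∧
      ((ConjS (iota n) a ∧ ConjS (iota (n + 1)) b) ∨
       (ConjS (iota (n + 1)) a ∧ ConjS (iota n) b)) := by
  classical
  obtain ⟨l, hlen, hlsw, hlprod⟩ := Stmt13Aux.wl_list g (2*n+1) hwl (by omega)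
  obtain ⟨k, v, hk2, hvinj, hgv, hvk, hmoved⟩ := Stmt13Aux.cycle_structure g hfs hc
  have hvne : ∀ p q, p < k → q < k → p ≠ q → v p ≠ v q :=
    fun p q hp hq hpq h => hpq (hvinj p hp q hq h)
  have hncard : {x | g x ≠ x}.ncard = k := by
    have hinjOn : Set.InjOn v (Set.Iio k) := fun p hp q hq h => hvinj p hp q hq h
    rw [hmoved, Set.ncard_image_of_injOn hinjOn]
    rw [← Finset.coe_range, Set.ncard_coe_finset, Finset.card_range]
  have hkle : k ≤ 2*n+2 := by
    have h1 := Stmt13Aux.moved_card_le l hlsw (by rw [hlprod]; exact hc)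
    rw [hlprod] at h1
    omega
  obtain ⟨hch1, hch2, hch3⟩ := Stmt13Aux.chainProd_spec (k-1) v
    (fun i hi j hj h => hvinj i (by omega) j (by omega) h)
  have hgchain : ((List.range (k-1)).map fun i => Equiv.swap (v i) (v (i+1))).prod = g := by
    apply Equiv.ext
    intro y
    by_cases hy : y ∈ v '' Set.Iio k
    · obtain ⟨j, hj', rfl⟩ := hy
      have hj : j < k := hj'
      by_cases hjk : j < k - 1
      · rw [hch1 j hjk, hgv j]
      · have hjeq : j = k - 1 := by omega
        subst hjeq
        have h1 : (k-1) + 1 = k := by omega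
        rw [hch2, hgv (k-1), h1, hvk]
    · have hgy : g y = y := by
        by_contra hgy
        exact hy (hmoved ▸ hgy)
      rw [hgy]
      apply hch3
      intro i hi h
      exact hy ⟨i, Set.mem_Iio.mpr (by omega), h.symm⟩
  have hkge : 2*n+1 ≤ k-1 := by
    have hwle := Stmt13Aux.wl_le g _ ?swaps hgchain
    rw [hwl] at hwle
    simpa using hwle
    case swaps =>
      intro τ hτ
      simp only [List.mem_map, List.mem_range] at hτ
      obtain ⟨i, hik, rfl⟩ := hτ
      exact ⟨_, _, hvne i (i+1) (by omega) (by omega) (by omega), rfl⟩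
  have hkeq : k = 2*n+2 := by omega
  set bi : ℕ → ℕ := fun i => if i = 0 then 0 else k - i with hbi
  have hbilt : ∀ i, i ≤ n → bi i < k := by
    intro i hi
    simp only [hbi]
    split <;> omega
  -- the two swap products
  have hda : ∀ i, i < n+1 → ∀ j, j < n+1 →
      (v (i+1) = v (j+1) → i = j) ∧ (v (bi i) = v (bi j) → i = j) ∧ v (i+1) ≠ v (bi j) := by
    intro i hi j hj
    refine ⟨fun h => ?_, fun h => ?_, fun h => ?_⟩
    · have := hvinj (i+1) (by omega) (j+1) (by omega) h
      omega
    · have := hvinj (bi i) (hbilt i (by omega)) (bi j) (hbilt j (by omega)) h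
      simp only [hbi] at this
      split_ifs at this <;> omega
    · have := hvinj (i+1) (by omega) (bi j) (hbilt j (by omega)) h
      simp only [hbi] at this
      split_ifs at this <;> omega
  have hdb : ∀ i, i < n → ∀ j, j < n →
      (v (i+1) = v (j+1) → i = j) ∧ (v (k-1-i) = v (k-1-j) → i = j) ∧ v (i+1) ≠ v (k-1-j) := by
    intro i hi j hj
    refine ⟨fun h => ?_, fun h => ?_, fun h => ?_⟩
    · have := hvinj (i+1) (by omega) (j+1) (by omega) h
      omega
    · have := hvinj (k-1-i) (by omega) (k-1-j) (by omega) h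
      omega
    · have := hvinj (i+1) (by omega) (k-1-j) (by omega) h
      omega
  obtain ⟨haev0, hafix0⟩ := Stmt13Aux.swapProd_spec (n+1)
    (fun i => v (i+1)) (fun i => v (bi i)) hda
  obtain ⟨hbev0, hbfix0⟩ := Stmt13Aux.swapProd_spec n
    (fun i => v (i+1)) (fun i => v (k-1-i)) hdb
  have haev : ∀ i, i < n+1 →
      (((List.range (n+1)).map fun i => Equiv.swap (v (i+1)) (v (bi i))).prod (v (i+1)) = v (bi i) ∧
       ((List.range (n+1)).map fun i => Equiv.swap (v (i+1)) (v (bi i))).prod (v (bi i)) = v (i+1)) :=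
    fun i hi => haev0 i hi
  have hafix : ∀ y, (∀ i, i < n+1 → y ≠ v (i+1) ∧ y ≠ v (bi i)) →
      ((List.range (n+1)).map fun i => Equiv.swap (v (i+1)) (v (bi i))).prod y = y :=
    fun y hy => hafix0 y hy
  have hbev : ∀ i, i < n →
      (((List.range n).map fun i => Equiv.swap (v (i+1)) (v (k-1-i))).prod (v (i+1)) = v (k-1-i) ∧
       ((List.range n).map fun i => Equiv.swap (v (i+1)) (v (k-1-i))).prod (v (k-1-i)) = v (i+1)) :=
    fun i hi => hbev0 i hi
  have hbfix : ∀ y, (∀ i, i < n → y ≠ v (i+1) ∧ y ≠ v (k-1-i)) →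
      ((List.range n).map fun i => Equiv.swap (v (i+1)) (v (k-1-i))).prod y = y :=
    fun y hy => hbfix0 y hy
  set a : Equiv.Perm ℕ := ((List.range (n+1)).map fun i => Equiv.swap (v (i+1)) (v (bi i))).prod
    with hadef
  set b : Equiv.Perm ℕ := ((List.range n).map fun i => Equiv.swap (v (i+1)) (v (k-1-i))).prod
    with hbdef
  have hab : a * b = g := by
    apply Equiv.ext
    intro y
    rw [Equiv.Perm.mul_apply]
    by_cases hy : y ∈ v '' Set.Iio k
    · obtain ⟨j, hj', rfl⟩ := hy
      have hj : j < k := hj'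
      rw [hgv j]
      by_cases hj0 : j = 0
      · subst hj0
        have hbfx : b (v 0) = v 0 := by
          apply hbfix
          intro i hi
          exact ⟨hvne 0 (i+1) (by omega) (by omega) (by omega),
                 hvne 0 (k-1-i) (by omega) (by omega) (by omega)⟩
        rw [hbfx]
        have hbi0 : bi 0 = 0 := by simp [hbi]
        have := (haev 0 (by omega)).2
        rw [hbi0] at this
        rw [this]
      · by_cases hjn : j ≤ n
        · have hb1 := (hbev (j-1) (by omega)).1
          have e1 : j - 1 + 1 = j := by omega
          have e2 : k - 1 - (j-1) = k - j := by omega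
          rw [e1, e2] at hb1
          rw [hb1]
          have ha1 := (haev j (by omega)).2
          have e3 : bi j = k - j := by simp [hbi, hj0]
          rw [e3] at ha1
          rw [ha1]
        · by_cases hjn1 : j = n+1
          · subst hjn1
            have hbfx : b (v (n+1)) = v (n+1) := by
              apply hbfix
              intro i hi
              exact ⟨hvne (n+1) (i+1) (by omega) (by omega) (by omega),
                     hvne (n+1) (k-1-i) (by omega) (by omega) (by omega)⟩
            rw [hbfx]
            have ha1 := (haev n (by omega)).1
            rw [ha1]
            by_cases hn0 : n = 0
            · subst hn0
              have e4 : bi 0 = 0 := by simp [hbi]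
              have h02 : v (0+1+1) = v 0 := by
                have e : 0+1+1 = k := by omega
                rw [e, hvk]
              rw [e4, h02]
            · have e3 : bi n = n + 1 + 1 := by simp only [hbi]; split <;> omega
              rw [e3]
          · have hjge : n+2 ≤ j := by omega
            have hb1 := (hbev (k-1-j) (by omega)).2
            have e1 : k - 1 - (k-1-j) = j := by omega
            have e2 : k - 1 - j + 1 = k - j := by omega
            rw [e1, e2] at hb1
            rw [hb1]
            have ha1 := (haev (k-j-1) (by omega)).1
            have e3 : k - j - 1 + 1 = k - j := by omega
            rw [e3] at ha1
            rw [ha1]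
            by_cases hjk1 : j = k-1
            · have e4 : bi (k-j-1) = 0 := by simp only [hbi]; split <;> omega
              rw [e4, ← hvk]
              congr 1
              omega
            · have e4 : bi (k-j-1) = j + 1 := by simp only [hbi]; split <;> omega
              rw [e4]
    · have hgy : g y = y := by
        by_contra hgy
        exact hy (hmoved ▸ hgy)
      rw [hgy]
      have hby : b y = y := by
        apply hbfix
        intro i hi
        exact ⟨fun h => hy ⟨i+1, Set.mem_Iio.mpr (by omega), h.symm⟩,
               fun h => hy ⟨k-1-i, Set.mem_Iio.mpr (by omega), h.symm⟩⟩
      rw [hby]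
      apply hafix
      intro i hi
      exact ⟨fun h => hy ⟨i+1, Set.mem_Iio.mpr (by omega), h.symm⟩,
             fun h => hy ⟨bi i, Set.mem_Iio.mpr (hbilt i (by omega)), h.symm⟩⟩
  -- conjugator for b
  obtain ⟨c, hcfs, hcv⟩ := Stmt13Aux.extend_perm (2*n) (fun j => j+1)
    (fun j => if j % 2 = 0 then v (j/2+1) else v (k-1-j/2))
    (by intro i hi j hj h; omega)
    (by
      intro i hi j hj h
      split_ifs at h with h1 h2 h2
      · have := hvinj (i/2+1) (by omega) (j/2+1) (by omega) h
        omega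
      · have := hvinj (i/2+1) (by omega) (k-1-j/2) (by omega) h
        omega
      · have := hvinj (k-1-i/2) (by omega) (j/2+1) (by omega) h
        omega
      · have := hvinj (k-1-i/2) (by omega) (k-1-j/2) (by omega) h
        omega)
  have hconjb : c * iota n * c⁻¹ = b := by
    rw [iota, Stmt13Aux.conj_swapProd c n (fun i => 2*i+1) (fun i => 2*i+2), hbdef]
    congr 1
    apply List.map_congr_left
    intro i hi
    simp only [List.mem_range] at hi
    have h1 := hcv (2*i) (by omega)
    have h2 := hcv (2*i+1) (by omega)
    rw [if_pos (by omega : (2*i) % 2 = 0)] at h1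
    rw [if_neg (by omega : ¬ (2*i+1) % 2 = 0)] at h2
    have e1 : (2*i)/2 = i := by omega
    have e2 : (2*i+1)/2 = i := by omega
    rw [e1] at h1
    rw [e2] at h2
    have e3 : 2*i+1+1 = 2*i+2 := by omega
    rw [e3] at h2
    rw [h1, h2]
  -- conjugator for a
  obtain ⟨c', hcfs', hcv'⟩ := Stmt13Aux.extend_perm (2*(n+1)) (fun j => j+1)
    (fun j => if j % 2 = 0 then v (j/2+1) else v (bi (j/2)))
    (by intro i hi j hj h; omega)
    (by
      intro i hi j hj h
      split_ifs at h with h1 h2 h2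
      · have := hvinj (i/2+1) (by omega) (j/2+1) (by omega) h
        omega
      · have := hvinj (i/2+1) (by omega) (bi (j/2)) (hbilt (j/2) (by omega)) h
        simp only [hbi] at this
        split_ifs at this <;> omega
      · have := hvinj (bi (i/2)) (hbilt (i/2) (by omega)) (j/2+1) (by omega) h
        simp only [hbi] at this
        split_ifs at this <;> omega
      · have := hvinj (bi (i/2)) (hbilt (i/2) (by omega)) (bi (j/2)) (hbilt (j/2) (by omega)) h
        simp only [hbi] at this
        split_ifs at this <;> omega)
  have hconja : c' * iota (n+1) * c'⁻¹ = a := by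
    rw [iota, Stmt13Aux.conj_swapProd c' (n+1) (fun i => 2*i+1) (fun i => 2*i+2), hadef]
    congr 1
    apply List.map_congr_left
    intro i hi
    simp only [List.mem_range] at hi
    have h1 := hcv' (2*i) (by omega)
    have h2 := hcv' (2*i+1) (by omega)
    rw [if_pos (by omega : (2*i) % 2 = 0)] at h1
    rw [if_neg (by omega : ¬ (2*i+1) % 2 = 0)] at h2
    have e1 : (2*i)/2 = i := by omega
    have e2 : (2*i+1)/2 = i := by omega
    rw [e1] at h1
    rw [e2] at h2
    have e3 : 2*i+1+1 = 2*i+2 := by omega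
    rw [e3] at h2
    rw [h1, h2]
  exact ⟨a, b, hab, Or.inr ⟨⟨c', hcfs', hconja⟩, ⟨c, hcfs, hconjb⟩⟩⟩
end

section
/- For every natural number k ≥ 1, in S_∞ we have (1 2 3 5 6 7 9 ⋯ 4k−3 4k−2 4k−1)⁻¹ · (1 3 4 5 7 8 9 ⋯ 4k−3 4k−1 4k) = ι_{2k}, which exhibits ι_{2k} as a product of two conjugates of any cycle of word length 3k−1. -/
section Stmt17Aux
open Equiv Equiv.Perm List

def Closed (l : List (Equiv.Perm ℕ)) (S : Set ℕ) : Prop := ∀ t ∈ l, ∀ x ∈ S, t x ∈ S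

def Reach (l : List (Equiv.Perm ℕ)) (X : Set ℕ) : Set ℕ := ⋂₀ {S | X ⊆ S ∧ Closed l S}

lemma subset_reach (l : List (Equiv.Perm ℕ)) (X : Set ℕ) : X ⊆ Reach l X :=
  fun x hx => Set.mem_sInter.2 fun _ hS => hS.1 hx

lemma reach_closed (l : List (Equiv.Perm ℕ)) (X : Set ℕ) : Closed l (Reach l X) :=
  fun t ht x hx => Set.mem_sInter.2 fun S hS => hS.2 t ht x (Set.mem_sInter.1 hx S hS)

lemma reach_min {l : List (Equiv.Perm ℕ)} {X S : Set ℕ} (h1 : X ⊆ S) (h2 : Closed l S) :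
    Reach l X ⊆ S := fun x hx => Set.mem_sInter.1 hx S ⟨h1, h2⟩

lemma closed_tail {t : Equiv.Perm ℕ} {l : List (Equiv.Perm ℕ)} {S : Set ℕ}
    (h : Closed (t :: l) S) : Closed l S := fun u hu => h u (mem_cons_of_mem _ hu)

lemma reach_mono {l : List (Equiv.Perm ℕ)} {X X' : Set ℕ} (h : X ⊆ X') :
    Reach l X ⊆ Reach l X' := reach_min (h.trans (subset_reach _ _)) (reach_closed _ _)

lemma reach_card (l : List (Equiv.Perm ℕ)) (hl : ∀ t ∈ l, t.IsSwap) (X : Finset ℕ) :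
    ∃ F : Finset ℕ, Reach l ↑X ⊆ ↑F ∧ F.card ≤ l.length + X.card := by
  induction l generalizing X with
  | nil =>
    exact ⟨X, reach_min le_rfl (fun t ht => absurd ht not_mem_nil), by simp⟩
  | cons t l ih =>
    obtain ⟨a, b, hab, rfl⟩ := hl t (mem_cons_self)
    have hl' : ∀ u ∈ l, u.IsSwap := fun u hu => hl u (mem_cons_of_mem _ hu)
    by_cases ha : a ∈ Reach l ↑X
    · obtain ⟨F, hF, hcard⟩ := ih hl' (insert b X)
      refine ⟨F, ?_, ?_⟩
      · refine (reach_min ?_ ?_).trans hF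
        · exact (Finset.coe_subset.2 (Finset.subset_insert b X)).trans (subset_reach _ _)
        · intro u hu x hx
          rcases mem_cons.1 hu with rfl | hu'
          · rcases eq_or_ne x a with rfl | hxa
            · rw [swap_apply_left]
              exact subset_reach _ _ (by simp)
            rcases eq_or_ne x b with rfl | hxb
            · rw [swap_apply_right]
              exact reach_mono (by simp [Finset.coe_insert, Set.subset_insert]) ha
            · rwa [swap_apply_of_ne_of_ne hxa hxb]
          · exact reach_closed _ _ u hu' x hx
      · calc F.card ≤ l.length + (insert b X).card := hcard
          _ ≤ l.length + (X.card + 1) := by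
              gcongr; exact Finset.card_insert_le _ _
          _ = (Equiv.swap a b :: l).length + X.card := by simp; omega
    · by_cases hb : b ∈ Reach l ↑X
      · obtain ⟨F, hF, hcard⟩ := ih hl' (insert a X)
        refine ⟨F, ?_, ?_⟩
        · refine (reach_min ?_ ?_).trans hF
          · exact (Finset.coe_subset.2 (Finset.subset_insert a X)).trans (subset_reach _ _)
          · intro u hu x hx
            rcases mem_cons.1 hu with rfl | hu'
            · rcases eq_or_ne x a with rfl | hxa
              · rw [swap_apply_left]
                exact reach_mono (by simp [Finset.coe_insert, Set.subset_insert]) hb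
              rcases eq_or_ne x b with rfl | hxb
              · rw [swap_apply_right]
                exact subset_reach _ _ (by simp)
              · rwa [swap_apply_of_ne_of_ne hxa hxb]
            · exact reach_closed _ _ u hu' x hx
        · calc F.card ≤ l.length + (insert a X).card := hcard
            _ ≤ l.length + (X.card + 1) := by
                gcongr; exact Finset.card_insert_le _ _
            _ = (Equiv.swap a b :: l).length + X.card := by simp; omega
      · obtain ⟨F, hF, hcard⟩ := ih hl' X
        refine ⟨F, (reach_min (subset_reach _ _) ?_).trans hF, by simpa using hcard.trans (by omega)⟩
        intro u hu x hx
        rcases mem_cons.1 hu with rfl | hu'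
        · rwa [swap_apply_of_ne_of_ne (ne_of_mem_of_not_mem hx ha) (ne_of_mem_of_not_mem hx hb)]
        · exact reach_closed _ _ u hu' x hx

lemma closed_prod {l : List (Equiv.Perm ℕ)} {S : Set ℕ} (h : Closed l S) {x : ℕ} (hx : x ∈ S) :
    l.prod x ∈ S := by
  induction l generalizing x with
  | nil => simpa
  | cons t l ih =>
    rw [prod_cons, Equiv.Perm.mul_apply]
    exact h t (mem_cons_self) _ (ih (closed_tail h) hx)

lemma closed_prod_inv {l : List (Equiv.Perm ℕ)} {S : Set ℕ} (hl : ∀ t ∈ l, t.IsSwap)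
    (h : Closed l S) {x : ℕ} (hx : x ∈ S) : l.prod⁻¹ x ∈ S := by
  induction l generalizing x with
  | nil => simpa
  | cons t l ih =>
    rw [prod_cons, mul_inv_rev, Equiv.Perm.mul_apply]
    obtain ⟨a, b, -, rfl⟩ := hl t (mem_cons_self)
    rw [Equiv.swap_inv]
    exact ih (fun u hu => hl u (mem_cons_of_mem _ hu)) (closed_tail h)
      (h _ (mem_cons_self) _ hx)

lemma closed_zpow {l : List (Equiv.Perm ℕ)} {S : Set ℕ} (hl : ∀ t ∈ l, t.IsSwap)
    (h : Closed l S) {x : ℕ} (hx : x ∈ S) (n : ℤ) : (l.prod ^ n) x ∈ S := by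
  induction n using Int.induction_on with
  | zero => simpa
  | succ n ih =>
    have e : l.prod ^ ((n : ℤ) + 1) = l.prod * l.prod ^ (n : ℤ) := by group
    rw [e, Equiv.Perm.mul_apply]
    exact closed_prod h ih
  | pred n ih =>
    have e : l.prod ^ (-(n : ℤ) - 1) = l.prod⁻¹ * l.prod ^ (-(n : ℤ)) := by group
    rw [e, Equiv.Perm.mul_apply]
    exact closed_prod_inv hl h ih

lemma ncard_supp_le {l : List (Equiv.Perm ℕ)} (hl : ∀ t ∈ l, t.IsSwap)
    (hc : l.prod.IsCycle) : {x | l.prod x ≠ x}.ncard ≤ l.length + 1 := by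
  obtain ⟨x, hx, hall⟩ := hc
  obtain ⟨F, hF, hcard⟩ := reach_card l hl {x}
  have hsub : {y | l.prod y ≠ y} ⊆ ↑F := by
    intro y hy
    obtain ⟨n, hn⟩ := hall hy
    refine hF (hn ▸ closed_zpow hl (reach_closed _ _) ?_ n)
    exact subset_reach _ _ (by simp)
  calc {x | l.prod x ≠ x}.ncard ≤ (↑F : Set ℕ).ncard :=
        Set.ncard_le_ncard hsub F.finite_toSet
    _ = F.card := Set.ncard_coe_finset F
    _ ≤ l.length + 1 := by simpa using hcard


-- wl lemmas
lemma wl_le {g : Equiv.Perm ℕ} {l : List (Equiv.Perm ℕ)} (hl : ∀ τ ∈ l, τ.IsSwap)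
    (hp : l.prod = g) : wl g ≤ l.length :=
  Nat.sInf_le ⟨l, rfl, hl, hp⟩

lemma wl_mem {g : Equiv.Perm ℕ} {l : List (Equiv.Perm ℕ)} (hl : ∀ τ ∈ l, τ.IsSwap)
    (hp : l.prod = g) :
    ∃ m : List (Equiv.Perm ℕ), m.length = wl g ∧ (∀ τ ∈ m, τ.IsSwap) ∧ m.prod = g :=
  Nat.sInf_mem (⟨l.length, l, rfl, hl, hp⟩ :
    Set.Nonempty {n | ∃ l : List (Equiv.Perm ℕ), l.length = n ∧ (∀ τ ∈ l, τ.IsSwap) ∧ l.prod = g})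

lemma wl_ge_of_cycle {g : Equiv.Perm ℕ} (hg : g.IsCycle) {n : ℕ}
    (hn : {x | g x ≠ x}.ncard = n)
    (hne : ∃ l : List (Equiv.Perm ℕ), (∀ τ ∈ l, τ.IsSwap) ∧ l.prod = g) :
    n - 1 ≤ wl g := by
  obtain ⟨l₀, hl₀, hp₀⟩ := hne
  refine le_csInf ⟨l₀.length, l₀, rfl, hl₀, hp₀⟩ ?_
  rintro m ⟨l, rfl, hsw, hp⟩
  have := ncard_supp_le hsw (hp ▸ hg)
  rw [hp, hn] at this
  omega

-- swaps from zipWith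
lemma zipWith_swaps : ∀ {l : List ℕ}, l.Nodup →
    ∀ t ∈ List.zipWith Equiv.swap l l.tail, t.IsSwap
  | [], _ => by simp
  | [a], _ => by simp
  | a :: b :: l, h => by
    intro t ht
    rw [List.tail_cons, List.zipWith_cons_cons] at ht
    rcases List.mem_cons.1 ht with rfl | ht'
    · exact ⟨a, b, fun hab => (List.nodup_cons.1 h).1 (hab ▸ (List.mem_cons_self (a := b) (l := l))), rfl⟩
    · exact zipWith_swaps (List.nodup_cons.1 h).2 t ht'

lemma supp_formPerm {l : List ℕ} (h : l.Nodup) (h2 : 2 ≤ l.length) :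
    {x | l.formPerm x ≠ x} = ↑l.toFinset := by
  refine List.support_formPerm_of_nodup' l h ?_
  intro x hx
  rw [hx] at h2
  simp at h2

lemma ncard_supp_formPerm {l : List ℕ} (h : l.Nodup) (h2 : 2 ≤ l.length) :
    {x | l.formPerm x ≠ x}.ncard = l.length := by
  rw [supp_formPerm h h2, Set.ncard_coe_finset, List.toFinset_card_of_nodup h]

lemma finSupp_formPerm {l : List ℕ} (h : l.Nodup) (h2 : 2 ≤ l.length) :
    FinSupp l.formPerm := by
  rw [FinSupp, supp_formPerm h h2]
  exact l.toFinset.finite_toSet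

lemma wl_formPerm {l : List ℕ} (h : l.Nodup) (h2 : 2 ≤ l.length) :
    wl l.formPerm = l.length - 1 := by
  have hlen : (List.zipWith Equiv.swap l l.tail).length = l.length - 1 := by
    rw [List.length_zipWith, List.length_tail]
    omega
  have hcyc := List.isCycle_formPerm h h2
  refine le_antisymm ?_ ?_
  · have hfp : (List.zipWith Equiv.swap l l.tail).prod = l.formPerm := rfl
    have := wl_le (zipWith_swaps h) hfp
    omega
  · exact wl_ge_of_cycle hcyc (ncard_supp_formPerm h h2)
      ⟨_, zipWith_swaps h, rfl⟩

-- conjugacy of finitely supported cycles with equal support cardinality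
lemma range_iff_apply {g : Equiv.Perm ℕ} {N : ℕ} (hsub : ∀ x, g x ≠ x → x ∈ Finset.range N) :
    ∀ x, g x ∈ Finset.range N ↔ x ∈ Finset.range N := by
  intro x
  rcases eq_or_ne (g x) x with h | h
  · rw [h]
  · have h2 : g (g x) ≠ g x := fun hc => h (g.injective hc)
    exact iff_of_true (hsub _ h2) (hsub x h)

lemma subtypePerm_isCycle {g : Equiv.Perm ℕ} {N : ℕ} (hg : g.IsCycle)
    (hsub : ∀ x, g x ≠ x → x ∈ Finset.range N) :
    (g.subtypePerm (range_iff_apply hsub)).IsCycle := by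
  obtain ⟨x, hx, hall⟩ := hg
  refine ⟨⟨x, hsub x hx⟩, ?_, ?_⟩
  · intro hEq
    exact hx (congrArg Subtype.val hEq)
  · rintro ⟨y, hy⟩ hmoved
    have hy' : g y ≠ y := fun hc => hmoved (Subtype.ext hc)
    obtain ⟨n, hn⟩ := hall hy'
    refine ⟨n, ?_⟩
    rw [Equiv.Perm.subtypePerm_zpow]
    exact Subtype.ext hn

lemma subtypePerm_support_card {g : Equiv.Perm ℕ} {N : ℕ}
    (hsub : ∀ x, g x ≠ x → x ∈ Finset.range N) :
    ((g.subtypePerm (range_iff_apply hsub)).support).card = {x | g x ≠ x}.ncard := by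
  have himg : {x | g x ≠ x} =
      Subtype.val '' (↑(g.subtypePerm (range_iff_apply hsub)).support :
        Set {x // x ∈ Finset.range N}) := by
    ext y
    simp only [Set.mem_setOf_eq, Set.mem_image, Finset.mem_coe, Equiv.Perm.mem_support]
    constructor
    · intro hy
      exact ⟨⟨y, hsub y hy⟩, fun hc => hy (congrArg Subtype.val hc), rfl⟩
    · rintro ⟨⟨z, hz⟩, hmoved, rfl⟩
      exact fun hc => hmoved (Subtype.ext hc)
  rw [himg, Set.ncard_image_of_injective _ Subtype.val_injective, Set.ncard_coe_finset]

lemma conjS_of_cycles {c d : Equiv.Perm ℕ} (hc : c.IsCycle) (hd : d.IsCycle)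
    (fc : FinSupp c) (fd : FinSupp d)
    (h : {x | c x ≠ x}.ncard = {x | d x ≠ x}.ncard) : ConjS c d := by
  obtain ⟨M, hM⟩ := (fc.union fd).bddAbove
  set N := M + 1 with hN
  have hsubc : ∀ x, c x ≠ x → x ∈ Finset.range N := by
    intro x hx
    have := hM (Set.mem_union_left _ hx)
    simp only [Finset.mem_range]; omega
  have hsubd : ∀ x, d x ≠ x → x ∈ Finset.range N := by
    intro x hx
    have := hM (Set.mem_union_right _ hx)
    simp only [Finset.mem_range]; omega
  set c' := c.subtypePerm (range_iff_apply hsubc) with hc'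
  set d' := d.subtypePerm (range_iff_apply hsubd) with hd'
  have hcc : c'.IsCycle := subtypePerm_isCycle hc hsubc
  have hdc : d'.IsCycle := subtypePerm_isCycle hd hsubd
  have hcard : c'.support.card = d'.support.card := by
    rw [hc', hd', subtypePerm_support_card hsubc, subtypePerm_support_card hsubd, h]
  obtain ⟨π, hπ⟩ := isConj_iff.1 (hcc.isConj hdc hcard)
  refine ⟨Equiv.Perm.ofSubtype π, ?_, ?_⟩
  · refine Set.Finite.subset (Finset.range N).finite_toSet ?_
    intro x hx
    by_contra hxN
    exact hx (Equiv.Perm.ofSubtype_apply_of_not_mem π (by simpa using hxN))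
  · have hoc : Equiv.Perm.ofSubtype c' = c :=
      Equiv.Perm.ofSubtype_subtypePerm _ hsubc
    have hod : Equiv.Perm.ofSubtype d' = d :=
      Equiv.Perm.ofSubtype_subtypePerm _ hsubd
    rw [← hoc, ← hod, ← map_inv, ← map_mul, ← map_mul, hπ]

-- wl under conjugation
lemma map_conj_prod (u : Equiv.Perm ℕ) : ∀ (m : List (Equiv.Perm ℕ)),
    (m.map (fun t => u * t * u⁻¹)).prod = u * m.prod * u⁻¹
  | [] => by simp
  | t :: m => by
    simp only [List.map_cons, List.prod_cons, map_conj_prod u m]; group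

lemma wl_conj_le {g : Equiv.Perm ℕ} (u : Equiv.Perm ℕ)
    {l : List (Equiv.Perm ℕ)} (hl : ∀ τ ∈ l, τ.IsSwap) (hp : l.prod = g) :
    wl (u * g * u⁻¹) ≤ wl g := by
  obtain ⟨m, hmlen, hmsw, hmp⟩ := wl_mem hl hp
  have hsw : ∀ τ ∈ m.map (fun t => u * t * u⁻¹), τ.IsSwap := by
    intro τ hτ
    obtain ⟨t, ht, rfl⟩ := List.mem_map.1 hτ
    obtain ⟨a, b, hab, rfl⟩ := hmsw t ht
    exact ⟨u a, u b, fun hc => hab (u.injective hc), (Equiv.swap_apply_apply u a b).symm⟩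
  have hprod : (m.map (fun t => u * t * u⁻¹)).prod = u * g * u⁻¹ := by
    rw [← hmp, map_conj_prod]
  have := wl_le hsw hprod
  rw [List.length_map, hmlen] at this
  exact this

-- conjugating a swap list
lemma conj_swap_list (u : Equiv.Perm ℕ) {l : List (Equiv.Perm ℕ)} (hl : ∀ τ ∈ l, τ.IsSwap) :
    ∀ τ ∈ l.map (fun t => u * t * u⁻¹), τ.IsSwap := by
  intro τ hτ
  obtain ⟨t, ht, rfl⟩ := List.mem_map.1 hτ
  obtain ⟨a, b, hab, rfl⟩ := hl t ht
  exact ⟨u a, u b, fun hc => hab (u.injective hc), (Equiv.swap_apply_apply u a b).symm⟩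

-- inverse has same support
lemma supp_inv (g : Equiv.Perm ℕ) : {x | g⁻¹ x ≠ x} = {x | g x ≠ x} := by
  ext x
  simp only [Set.mem_setOf_eq, ne_eq]
  rw [Equiv.Perm.inv_eq_iff_eq, eq_comm]

-- the explicit index functions
def f1 (i : ℕ) : ℕ := 4 * (i / 3) + i % 3 + 1
def f2 (i : ℕ) : ℕ := 4 * (i / 3) + i % 3 + min (i % 3 + 1) 2

lemma f1_inj : Function.Injective f1 := by
  intro a b h; simp only [f1] at h; omega

lemma f2_inj : Function.Injective f2 := by
  intro a b h; simp only [f2] at h; omega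

lemma L1_eq (k : ℕ) :
    (List.range k).flatMap (fun j => [4*j+1, 4*j+2, 4*j+3]) = (List.range (3*k)).map f1 := by
  induction k with
  | zero => simp
  | succ k ih =>
    rw [List.range_succ, List.flatMap_append, ih, show 3 * (k+1) = 3*k + 3 by ring,
      List.range_add, List.map_append]
    congr 1
    simp only [List.flatMap_cons, List.flatMap_nil, List.append_nil,
      show (List.range 3) = [0, 1, 2] by rfl, List.map_cons, List.map_nil, f1,
      List.cons.injEq, List.nil_eq, and_true]
    omega

lemma L2_eq (k : ℕ) :
    (List.range k).flatMap (fun j => [4*j+1, 4*j+3, 4*j+4]) = (List.range (3*k)).map f2 := by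
  induction k with
  | zero => simp
  | succ k ih =>
    rw [List.range_succ, List.flatMap_append, ih, show 3 * (k+1) = 3*k + 3 by ring,
      List.range_add, List.map_append]
    congr 1
    simp only [List.flatMap_cons, List.flatMap_nil, List.append_nil,
      show (List.range 3) = [0, 1, 2] by rfl, List.map_cons, List.map_nil, f2,
      List.cons.injEq, List.nil_eq, and_true]
    omega

lemma formPerm_map_range_apply (f : ℕ → ℕ) (hf : Function.Injective f) (n i : ℕ) (h : i < n) :
    ((List.range n).map f).formPerm (f i) = f ((i + 1) % n) := by
  have hnd : ((List.range n).map f).Nodup := (List.nodup_range (n := n)).map hf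
  have hi : i < ((List.range n).map f).length := by simpa using h
  have := List.formPerm_apply_getElem _ hnd i hi
  simpa using this

lemma formPerm_map_range_fix (f : ℕ → ℕ) (n x : ℕ) (h : ∀ i, i < n → f i ≠ x) :
    ((List.range n).map f).formPerm x = x := by
  apply List.formPerm_apply_of_notMem
  simp only [List.mem_map, List.mem_range, not_exists, not_and]
  exact h

-- _root_.iota lemmas
lemma iotaSwap_succ (m : ℕ) : _root_.iota (m+1) = _root_.iota m * Equiv.swap (2*m+1) (2*m+2) := by
  rw [_root_.iota, _root_.iota, List.range_succ, List.map_append, List.prod_append]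
  simp

lemma iota_fix {m x : ℕ} (h : x = 0 ∨ 2*m < x) : _root_.iota m x = x := by
  induction m with
  | zero => simp [_root_.iota]
  | succ m ih =>
    rw [iotaSwap_succ, Equiv.Perm.mul_apply,
      Equiv.swap_apply_of_ne_of_ne (by omega) (by omega), ih (by omega)]

lemma iota_odd {m i : ℕ} (h : i < m) : _root_.iota m (2*i+1) = 2*i+2 := by
  induction m with
  | zero => omega
  | succ m ih =>
    rw [iotaSwap_succ, Equiv.Perm.mul_apply]
    rcases Nat.lt_or_ge i m with h' | h'
    · rw [Equiv.swap_apply_of_ne_of_ne (by omega) (by omega), ih h']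
    · have hi : i = m := by omega
      subst hi
      rw [Equiv.swap_apply_left, iota_fix (Or.inr (by omega))]

lemma iota_even {m i : ℕ} (h : i < m) : _root_.iota m (2*i+2) = 2*i+1 := by
  induction m with
  | zero => omega
  | succ m ih =>
    rw [iotaSwap_succ, Equiv.Perm.mul_apply]
    rcases Nat.lt_or_ge i m with h' | h'
    · rw [Equiv.swap_apply_of_ne_of_ne (by omega) (by omega), ih h']
    · have hi : i = m := by omega
      subst hi
      rw [Equiv.swap_apply_right, iota_fix (Or.inr (by omega))]

end Stmt17Aux

/-- for `k ≥ 1`, the cycles `σ = (1 2 3 5 6 7 9 ⋯ 4k−3 4k−2 4k−1)` and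
`τ = (1 3 4 5 7 8 9 ⋯ 4k−3 4k−1 4k)`, each of word length `3k−1`, satisfy
`σ⁻¹ · τ = ι_{2k}`, exhibiting `ι_{2k}` as a product of two conjugates of any cycle of
word length `3k−1`. -/
theorem stmt17 (k : ℕ) (hk : 1 ≤ k) :
    ∃ σ τ : Equiv.Perm ℕ,
      σ = List.formPerm ((List.range k).flatMap (fun j => [4*j+1, 4*j+2, 4*j+3])) ∧
      τ = List.formPerm ((List.range k).flatMap (fun j => [4*j+1, 4*j+3, 4*j+4])) ∧
      σ.IsCycle ∧ τ.IsCycle ∧ wl σ = 3 * k - 1 ∧ wl τ = 3 * k - 1 ∧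
      σ⁻¹ * τ = iota (2 * k) ∧
      ∀ c : Equiv.Perm ℕ, c.IsCycle → FinSupp c → wl c = 3 * k - 1 →
        ∃ a b : Equiv.Perm ℕ, ConjS c a ∧ ConjS c b ∧ a * b = iota (2 * k) := by
  have nd1 : ((List.range (3*k)).map f1).Nodup := List.nodup_range.map f1_inj
  have nd2 : ((List.range (3*k)).map f2).Nodup := List.nodup_range.map f2_inj
  have len1 : ((List.range (3*k)).map f1).length = 3*k := by simp
  have len2 : ((List.range (3*k)).map f2).length = 3*k := by simp
  have h21 : 2 ≤ ((List.range (3*k)).map f1).length := by rw [len1]; omega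
  have h22 : 2 ≤ ((List.range (3*k)).map f2).length := by rw [len2]; omega
  have cyc1 : (((List.range (3*k)).map f1).formPerm).IsCycle := List.isCycle_formPerm nd1 h21
  have cyc2 : (((List.range (3*k)).map f2).formPerm).IsCycle := List.isCycle_formPerm nd2 h22
  have wl1 : wl (((List.range (3*k)).map f1).formPerm) = 3*k - 1 := by
    rw [wl_formPerm nd1 h21, len1]
  have wl2 : wl (((List.range (3*k)).map f2).formPerm) = 3*k - 1 := by
    rw [wl_formPerm nd2 h22, len2]
  have sup1 : {x | ((List.range (3*k)).map f1).formPerm x ≠ x}.ncard = 3*k := by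
    rw [ncard_supp_formPerm nd1 h21, len1]
  have sup2 : {x | ((List.range (3*k)).map f2).formPerm x ≠ x}.ncard = 3*k := by
    rw [ncard_supp_formPerm nd2 h22, len2]
  have fs1 : FinSupp (((List.range (3*k)).map f1).formPerm) := finSupp_formPerm nd1 h21
  have fs2 : FinSupp (((List.range (3*k)).map f2).formPerm) := finSupp_formPerm nd2 h22
  -- the key identity
  have key : (((List.range (3*k)).map f1).formPerm)⁻¹ * ((List.range (3*k)).map f2).formPerm
      = iota (2*k) := by
    ext x
    rw [Equiv.Perm.mul_apply]
    apply Equiv.injective (((List.range (3*k)).map f1).formPerm)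
    rw [← Equiv.Perm.mul_apply (((List.range (3*k)).map f1).formPerm), mul_inv_cancel, Equiv.Perm.one_apply]
    by_cases hx : x = 0 ∨ 4*k < x
    · rw [formPerm_map_range_fix f2 _ _ (by intro i hi; simp only [f2]; omega),
        iota_fix (by omega), formPerm_map_range_fix f1 _ _ (by intro i hi; simp only [f1]; omega)]
    · push_neg at hx
      obtain ⟨j, r, hj, hr1, hr4, rfl⟩ : ∃ j r, j < k ∧ 1 ≤ r ∧ r ≤ 4 ∧ x = 4*j+r :=
        ⟨(x-1)/4, x - 4*((x-1)/4), by omega, by omega, by omega, by omega⟩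
      interval_cases r
      · -- r = 1
        have t1 : f2 (3*j) = 4*j+1 := by simp only [f2]; omega
        have lhs : ((List.range (3*k)).map f2).formPerm (4*j+1) = 4*j+3 := by
          rw [← t1, formPerm_map_range_apply f2 f2_inj _ _ (by omega),
            Nat.mod_eq_of_lt (by omega)]
          simp only [f2]; omega
        have hio : iota (2*k) (4*j+1) = 4*j+2 := by
          have h := iota_odd (m := 2*k) (i := 2*j) (by omega)
          rw [show 2*(2*j)+1 = 4*j+1 by ring, show 2*(2*j)+2 = 4*j+2 by ring] at h
          exact h
        have s1 : f1 (3*j+1) = 4*j+2 := by simp only [f1]; omega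
        have rhs : ((List.range (3*k)).map f1).formPerm (4*j+2) = 4*j+3 := by
          rw [← s1, formPerm_map_range_apply f1 f1_inj _ _ (by omega),
            Nat.mod_eq_of_lt (by omega)]
          simp only [f1]; omega
        rw [lhs, hio, rhs]
      · -- r = 2
        have lhs : ((List.range (3*k)).map f2).formPerm (4*j+2) = 4*j+2 :=
          formPerm_map_range_fix f2 _ _ (by intro i hi; simp only [f2]; omega)
        have hio : iota (2*k) (4*j+2) = 4*j+1 := by
          have h := iota_even (m := 2*k) (i := 2*j) (by omega)
          rw [show 2*(2*j)+2 = 4*j+2 by ring, show 2*(2*j)+1 = 4*j+1 by ring] at h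
          exact h
        have s0 : f1 (3*j) = 4*j+1 := by simp only [f1]; omega
        have rhs : ((List.range (3*k)).map f1).formPerm (4*j+1) = 4*j+2 := by
          rw [← s0, formPerm_map_range_apply f1 f1_inj _ _ (by omega),
            Nat.mod_eq_of_lt (by omega)]
          simp only [f1]; omega
        rw [lhs, hio, rhs]
      · -- r = 3
        have t1 : f2 (3*j+1) = 4*j+3 := by simp only [f2]; omega
        have lhs : ((List.range (3*k)).map f2).formPerm (4*j+3) = 4*j+4 := by
          rw [← t1, formPerm_map_range_apply f2 f2_inj _ _ (by omega),
            Nat.mod_eq_of_lt (by omega)]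
          simp only [f2]; omega
        have hio : iota (2*k) (4*j+3) = 4*j+4 := by
          have h := iota_odd (m := 2*k) (i := 2*j+1) (by omega)
          rw [show 2*(2*j+1)+1 = 4*j+3 by ring, show 2*(2*j+1)+2 = 4*j+4 by ring] at h
          exact h
        have rhs : ((List.range (3*k)).map f1).formPerm (4*j+4) = 4*j+4 :=
          formPerm_map_range_fix f1 _ _ (by intro i hi; simp only [f1]; omega)
        rw [lhs, hio, rhs]
      · -- r = 4
        have t1 : f2 (3*j+2) = 4*j+4 := by simp only [f2]; omega
        have lhs : ((List.range (3*k)).map f2).formPerm (4*j+4) = f2 ((3*j+3) % (3*k)) := by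
          rw [← t1, formPerm_map_range_apply f2 f2_inj _ _ (by omega)]
        have hio : iota (2*k) (4*j+4) = 4*j+3 := by
          have h := iota_even (m := 2*k) (i := 2*j+1) (by omega)
          rw [show 2*(2*j+1)+2 = 4*j+4 by ring, show 2*(2*j+1)+1 = 4*j+3 by ring] at h
          exact h
        have s1 : f1 (3*j+2) = 4*j+3 := by simp only [f1]; omega
        have rhs : ((List.range (3*k)).map f1).formPerm (4*j+3) = f1 ((3*j+3) % (3*k)) := by
          rw [← s1, formPerm_map_range_apply f1 f1_inj _ _ (by omega)]
        rw [lhs, hio, rhs]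
        rcases Nat.lt_or_ge (j+1) k with hjk | hjk
        · rw [Nat.mod_eq_of_lt (by omega)]
          simp only [f1, f2]; omega
        · rw [show 3*j+3 = 3*k by omega, Nat.mod_self]
          simp only [f1, f2]
          omega
  refine ⟨((List.range (3*k)).map f1).formPerm, ((List.range (3*k)).map f2).formPerm,
    by rw [L1_eq k], by rw [L2_eq k], cyc1, cyc2, wl1, wl2, key, ?_⟩
  -- the universal clause
  intro c hcyc hfs hwlc
  have cyc1' : ((((List.range (3*k)).map f1).formPerm)⁻¹).IsCycle := cyc1.inv
  have fs1' : FinSupp ((((List.range (3*k)).map f1).formPerm)⁻¹) := by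
    rw [FinSupp, supp_inv]; exact fs1
  have sup1' : {x | (((List.range (3*k)).map f1).formPerm)⁻¹ x ≠ x}.ncard = 3*k := by
    rw [supp_inv]; exact sup1
  -- support cardinality of c is exactly 3k
  obtain ⟨x0, hx0, -⟩ := id hcyc
  have hpair : ({x0, c x0} : Set ℕ) ⊆ {x | c x ≠ x} := by
    intro y hy
    rcases hy with rfl | hy
    · exact hx0
    · rw [Set.mem_singleton_iff] at hy
      subst hy
      exact fun h => hx0 (c.injective h)
  have hm2 : 2 ≤ {x | c x ≠ x}.ncard := by
    have hle := Set.ncard_le_ncard hpair hfs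
    rwa [Set.ncard_pair (fun h => hx0 h.symm)] at hle
  -- conjugate c to the standard cycle on range m to pin down its support size
  have ndE : (List.range ({x | c x ≠ x}.ncard)).Nodup := List.nodup_range
  have h2E : 2 ≤ (List.range ({x | c x ≠ x}.ncard)).length := by
    rw [List.length_range]; omega
  have cycE := List.isCycle_formPerm ndE h2E
  have fsE := finSupp_formPerm ndE h2E
  have supE : {x | (List.range ({x | c x ≠ x}.ncard)).formPerm x ≠ x}.ncard
      = {x | c x ≠ x}.ncard := by
    rw [ncard_supp_formPerm ndE h2E, List.length_range]
  obtain ⟨u, hu, huc⟩ := conjS_of_cycles hcyc cycE hfs fsE supE.symm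
  have hcE : u⁻¹ * (List.range ({x | c x ≠ x}.ncard)).formPerm * u⁻¹⁻¹ = c := by
    rw [inv_inv, ← huc]; group
  have hfpE : (List.zipWith Equiv.swap (List.range ({x | c x ≠ x}.ncard))
      (List.range ({x | c x ≠ x}.ncard)).tail).prod
      = (List.range ({x | c x ≠ x}.ncard)).formPerm := rfl
  have hle1 : wl c ≤ wl ((List.range ({x | c x ≠ x}.ncard)).formPerm) := by
    have h := wl_conj_le u⁻¹ (zipWith_swaps ndE) hfpE
    rwa [hcE] at h
  have hwlE : wl ((List.range ({x | c x ≠ x}.ncard)).formPerm) = {x | c x ≠ x}.ncard - 1 := by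
    rw [wl_formPerm ndE h2E, List.length_range]
  have hwitp : ((List.zipWith Equiv.swap (List.range ({x | c x ≠ x}.ncard))
      (List.range ({x | c x ≠ x}.ncard)).tail).map (fun t => u⁻¹ * t * u⁻¹⁻¹)).prod = c := by
    rw [map_conj_prod, hfpE, hcE]
  obtain ⟨lw, hlwlen, hlwsw, hlwp⟩ := wl_mem (conj_swap_list u⁻¹ (zipWith_swaps ndE)) hwitp
  have hub := ncard_supp_le hlwsw (by rw [hlwp]; exact hcyc)
  rw [hlwp, hlwlen, hwlc] at hub
  rw [hwlE] at hle1
  rw [hwlc] at hle1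
  have hmeq : {x | c x ≠ x}.ncard = 3*k := by omega
  refine ⟨(((List.range (3*k)).map f1).formPerm)⁻¹, ((List.range (3*k)).map f2).formPerm,
    ?_, ?_, key⟩
  · exact conjS_of_cycles hcyc cyc1' hfs fs1' (by rw [hmeq, sup1'])
  · exact conjS_of_cycles hcyc cyc2 hfs fs2 (by rw [hmeq, sup2])
end
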